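/- arXiv:2508.21022 — 7 statements merged into one kernel-verified Lean document; each statement's English description precedes it below -/
import Mathlib

section
/- Consider the randomized iteration θ_{t+1} − θ* = (I − P(S_t))(θ_t − θ*), where S_0, S_1, ... are i.i.d. and P(S) is a random symmetric matrix with 0 ⪯ P(S) ⪯ I and P̄ = E[P(S)]. Let α = λ_min(P̄). Then E‖θ_t − θ*‖² ≤ (1 − α)^t ‖θ_0 − θ*‖². -/
open Matrix

/-- Trajectory of the randomized iteration `θ_{t+1} = θ_t − P(S_t)(θ_t − θ*)`
driven by the finite sequence of samples `σ : Fin t → Ω`. -/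
def traj {n : ℕ} {Ω : Type*} (P : Ω → Matrix (Fin n) (Fin n) ℝ)
    (θ0 θs : Fin n → ℝ) : (t : ℕ) → (Fin t → Ω) → (Fin n → ℝ)
  | 0, _ => θ0
  | (t + 1), σ =>
      traj P θ0 θs t (fun i => σ i.castSucc) -
        (P (σ (Fin.last t))) *ᵥ (traj P θ0 θs t (fun i => σ i.castSucc) - θs)

lemma aux_contract {n : ℕ} (Q : Matrix (Fin n) (Fin n) ℝ) (hQ : Q.PosSemidef)
    (hQ1 : ((1 : Matrix (Fin n) (Fin n) ℝ) - Q).PosSemidef) (v : Fin n → ℝ) :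
    (v - Q *ᵥ v) ⬝ᵥ (v - Q *ᵥ v) ≤ v ⬝ᵥ v - v ⬝ᵥ (Q *ᵥ v) := by
  have hQt : Qᵀ = Q := by
    have := hQ.1
    rwa [Matrix.IsHermitian, conjTranspose_eq_transpose_of_trivial] at this
  have hsym : ∀ x y : Fin n → ℝ, x ⬝ᵥ (Q *ᵥ y) = (Q *ᵥ x) ⬝ᵥ y := by
    intro x y
    rw [dotProduct_mulVec, ← Matrix.mulVec_transpose, hQt]
  have h1 := hQ1.dotProduct_mulVec_nonneg (Q *ᵥ v)
  have h2 := hQ.dotProduct_mulVec_nonneg (v - Q *ᵥ v)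
  simp only [star_trivial, Matrix.sub_mulVec, Matrix.one_mulVec, Matrix.mulVec_sub,
    dotProduct_sub, sub_dotProduct] at h1 h2 ⊢
  have e1 : (Q *ᵥ v) ⬝ᵥ v = v ⬝ᵥ (Q *ᵥ v) := (hsym v v).symm
  have e2 : v ⬝ᵥ (Q *ᵥ (Q *ᵥ v)) = (Q *ᵥ v) ⬝ᵥ (Q *ᵥ v) := hsym v (Q *ᵥ v)
  nlinarith [h1, h2]

lemma aux_rayleigh {n : ℕ} (A : Matrix (Fin n) (Fin n) ℝ) (hA : A.IsHermitian) (α : ℝ)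
    (hα : ∀ i, α ≤ hA.eigenvalues i) (v : Fin n → ℝ) :
    α * (v ⬝ᵥ v) ≤ v ⬝ᵥ (A *ᵥ v) := by
  set U : Matrix (Fin n) (Fin n) ℝ := (hA.eigenvectorUnitary : Matrix (Fin n) (Fin n) ℝ) with hUdef
  have hU : U * Uᴴ = 1 := by
    have := (Matrix.mem_unitaryGroup_iff).mp hA.eigenvectorUnitary.2
    rwa [Matrix.star_eq_conjTranspose] at this
  have key : A - α • (1 : Matrix (Fin n) (Fin n) ℝ) =
      U * diagonal (fun i => hA.eigenvalues i - α) * Uᴴ := by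
    have h1 : diagonal (fun i => hA.eigenvalues i - α) =
        diagonal (RCLike.ofReal ∘ hA.eigenvalues) - α • (1 : Matrix (Fin n) (Fin n) ℝ) := by
      rw [Matrix.smul_one_eq_diagonal, ← Matrix.diagonal_sub]
      congr 1
    rw [h1, Matrix.mul_sub, Matrix.sub_mul]
    congr 1
    · rw [hUdef, ← Matrix.star_eq_conjTranspose]
      exact hA.spectral_theorem
    · rw [mul_smul_comm, smul_mul_assoc, mul_one, hU]
  have hpsd : (A - α • (1 : Matrix (Fin n) (Fin n) ℝ)).PosSemidef := by
    rw [key]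
    exact (posSemidef_diagonal_iff.mpr fun i => sub_nonneg.mpr (hα i)).mul_mul_conjTranspose_same U
  have h := hpsd.dotProduct_mulVec_nonneg v
  simp only [star_trivial, Matrix.sub_mulVec, Matrix.smul_mulVec, Matrix.one_mulVec,
    dotProduct_sub, dotProduct_smul, smul_eq_mul] at h
  linarith

lemma aux_eig_le_one {n : ℕ} (A : Matrix (Fin n) (Fin n) ℝ) (hA : A.IsHermitian) (i : Fin n)
    (hA1 : ((1 : Matrix (Fin n) (Fin n) ℝ) - A).PosSemidef) : hA.eigenvalues i ≤ 1 := by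
  set u : Fin n → ℝ := ⇑(hA.eigenvectorBasis i) with hu
  have huu : u ⬝ᵥ u = 1 := by
    have h1 : ‖hA.eigenvectorBasis i‖ = 1 := hA.eigenvectorBasis.orthonormal.1 i
    have h2 : (inner ℝ (hA.eigenvectorBasis i) (hA.eigenvectorBasis i) : ℝ) = 1 := by
      rw [real_inner_self_eq_norm_sq, h1, one_pow]
    rw [← h2]
    rw [PiLp.inner_apply]
    simp [dotProduct, RCLike.inner_apply, conj_trivial, hu, sq]
  have hm : A *ᵥ u = hA.eigenvalues i • u := hA.mulVec_eigenvectorBasis i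
  have h := hA1.dotProduct_mulVec_nonneg u
  simp only [star_trivial, Matrix.sub_mulVec, Matrix.one_mulVec, dotProduct_sub, hm,
    dotProduct_smul, smul_eq_mul, huu, mul_one] at h
  linarith

lemma sum_snoc {Ω : Type*} [Fintype Ω] {M : Type*} [AddCommMonoid M] (t : ℕ)
    (F : (Fin (t + 1) → Ω) → M) :
    ∑ σ : Fin (t + 1) → Ω, F σ = ∑ σ' : Fin t → Ω, ∑ s : Ω, F (Fin.snoc σ' s) := by
  rw [← Equiv.sum_comp (Fin.snocEquiv (fun _ : Fin (t + 1) => Ω)) F, Fintype.sum_prod_type,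
    Finset.sum_comm]
  rfl

/-- For the randomized iteration `θ_{t+1} − θ* = (I − P(S_t))(θ_t − θ*)` with i.i.d. samples
and `0 ⪯ P(S) ⪯ I`, `α = λ_min(P̄)`, the expected squared error decays as `(1 − α)^t`. -/
theorem stmt3 {n : ℕ} (hn : 0 < n) {Ω : Type*} [Fintype Ω]
    (w : Ω → ℝ) (hw : ∀ s, 0 ≤ w s) (hw1 : ∑ s, w s = 1)
    (P : Ω → Matrix (Fin n) (Fin n) ℝ)
    (hpos : ∀ s, (P s).PosSemidef)
    (hle : ∀ s, ((1 : Matrix (Fin n) (Fin n) ℝ) - P s).PosSemidef)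
    (Pbar : Matrix (Fin n) (Fin n) ℝ) (hPbar : Pbar = ∑ s, w s • P s)
    (hPbarH : Pbar.IsHermitian) (α : ℝ) (hα : α = ⨅ i, hPbarH.eigenvalues i)
    (θ0 θs : Fin n → ℝ) (t : ℕ) :
    ∑ σ : Fin t → Ω, (∏ i, w (σ i)) *
        ((traj P θ0 θs t σ - θs) ⬝ᵥ (traj P θ0 θs t σ - θs)) ≤
      (1 - α) ^ t * ((θ0 - θs) ⬝ᵥ (θ0 - θs)) := by
  classical
  -- `1 - P̄` is PSD
  have hPbar1 : ((1 : Matrix (Fin n) (Fin n) ℝ) - Pbar).PosSemidef := by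
    have key : (1 : Matrix (Fin n) (Fin n) ℝ) - Pbar =
        ∑ s, w s • ((1 : Matrix (Fin n) (Fin n) ℝ) - P s) := by
      rw [hPbar]
      simp only [smul_sub, Finset.sum_sub_distrib, ← Finset.sum_smul, hw1, one_smul]
    rw [key]
    refine Finset.sum_induction _ Matrix.PosSemidef (fun a b ha hb => ha.add hb)
      Matrix.PosSemidef.zero (fun s _ => ?_)
    refine .of_dotProduct_mulVec_nonneg ?_ fun x => ?_
    · rw [Matrix.IsHermitian, Matrix.conjTranspose_smul, (hle s).1.eq, star_trivial]
    · rw [Matrix.smul_mulVec, dotProduct_smul, smul_eq_mul]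
      exact mul_nonneg (hw s) ((hle s).dotProduct_mulVec_nonneg x)
  have hαle : ∀ i, α ≤ hPbarH.eigenvalues i := by
    intro i
    rw [hα]
    exact ciInf_le (Finite.bddBelow_range _) i
  have hα1 : α ≤ 1 :=
    le_trans (hαle ⟨0, hn⟩) (aux_eig_le_one Pbar hPbarH ⟨0, hn⟩ hPbar1)
  have h1α : (0 : ℝ) ≤ 1 - α := by linarith
  -- one-step expected contraction
  have hstep : ∀ v : Fin n → ℝ,
      ∑ s, w s * ((v - P s *ᵥ v) ⬝ᵥ (v - P s *ᵥ v)) ≤ (1 - α) * (v ⬝ᵥ v) := by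
    intro v
    have hray := aux_rayleigh Pbar hPbarH α hαle v
    have hbar : v ⬝ᵥ (Pbar *ᵥ v) = ∑ s, w s * (v ⬝ᵥ (P s *ᵥ v)) := by
      rw [hPbar]
      have hms : (∑ s, w s • P s) *ᵥ v = ∑ s, w s • (P s *ᵥ v) := by
        ext j
        simp only [Matrix.mulVec, dotProduct, Finset.sum_apply, Matrix.sum_apply,
          Matrix.smul_apply, Pi.smul_apply, smul_eq_mul, Finset.sum_mul, Finset.mul_sum]
        rw [Finset.sum_comm]
        exact Finset.sum_congr rfl fun s _ => Finset.sum_congr rfl fun i _ => by ring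
      rw [hms]
      simp only [dotProduct, Finset.sum_apply, Pi.smul_apply, smul_eq_mul, Finset.mul_sum]
      rw [Finset.sum_comm]
      exact Finset.sum_congr rfl fun s _ => Finset.sum_congr rfl fun i _ => by ring
    calc ∑ s, w s * ((v - P s *ᵥ v) ⬝ᵥ (v - P s *ᵥ v))
        ≤ ∑ s, w s * (v ⬝ᵥ v - v ⬝ᵥ (P s *ᵥ v)) :=
          Finset.sum_le_sum fun s _ =>
            mul_le_mul_of_nonneg_left (aux_contract (P s) (hpos s) (hle s) v) (hw s)
      _ = (∑ s, w s) * (v ⬝ᵥ v) - ∑ s, w s * (v ⬝ᵥ (P s *ᵥ v)) := by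
          rw [Finset.sum_mul]
          rw [← Finset.sum_sub_distrib]
          congr 1
          funext s
          ring
      _ = 1 * (v ⬝ᵥ v) - v ⬝ᵥ (Pbar *ᵥ v) := by rw [hw1, hbar]
      _ ≤ (1 - α) * (v ⬝ᵥ v) := by linarith
  induction t with
  | zero => simp [traj]
  | succ t ih =>
    rw [sum_snoc]
    trans (∑ σ' : Fin t → Ω, (∏ i, w (σ' i)) *
        ∑ s, w s * (((traj P θ0 θs t σ' - θs) - P s *ᵥ (traj P θ0 θs t σ' - θs)) ⬝ᵥ
          ((traj P θ0 θs t σ' - θs) - P s *ᵥ (traj P θ0 θs t σ' - θs))))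
    · apply le_of_eq
      refine Finset.sum_congr rfl fun σ' _ => ?_
      rw [Finset.mul_sum]
      refine Finset.sum_congr rfl fun s _ => ?_
      have hp : (∏ i, w ((Fin.snoc σ' s : Fin (t + 1) → Ω) i)) = (∏ i, w (σ' i)) * w s := by
        rw [Fin.prod_univ_castSucc]
        simp
      have ht : traj P θ0 θs (t + 1) (Fin.snoc σ' s : Fin (t + 1) → Ω) - θs =
          (traj P θ0 θs t σ' - θs) - P s *ᵥ (traj P θ0 θs t σ' - θs) := by
        simp only [traj, Fin.snoc_castSucc, Fin.snoc_last]
        abel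
      rw [hp, ht]
      ring
    · calc ∑ σ' : Fin t → Ω, (∏ i, w (σ' i)) *
            ∑ s, w s * (((traj P θ0 θs t σ' - θs) - P s *ᵥ (traj P θ0 θs t σ' - θs)) ⬝ᵥ
              ((traj P θ0 θs t σ' - θs) - P s *ᵥ (traj P θ0 θs t σ' - θs)))
          ≤ ∑ σ' : Fin t → Ω, (∏ i, w (σ' i)) *
              ((1 - α) * ((traj P θ0 θs t σ' - θs) ⬝ᵥ (traj P θ0 θs t σ' - θs))) :=
            Finset.sum_le_sum fun σ' _ => mul_le_mul_of_nonneg_left (hstep _)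
              (Finset.prod_nonneg fun i _ => hw _)
        _ = (1 - α) * ∑ σ' : Fin t → Ω, (∏ i, w (σ' i)) *
              ((traj P θ0 θs t σ' - θs) ⬝ᵥ (traj P θ0 θs t σ' - θs)) := by
            rw [Finset.mul_sum]
            exact Finset.sum_congr rfl fun σ' _ => by ring
        _ ≤ (1 - α) * ((1 - α) ^ t * ((θ0 - θs) ⬝ᵥ (θ0 - θs))) :=
            mul_le_mul_of_nonneg_left ih h1α
        _ = (1 - α) ^ (t + 1) * ((θ0 - θs) ⬝ᵥ (θ0 - θs)) := by ring
end

section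
/- Under strong consistency (HJθ* + q = 0 and range(HJ) ⊆ range(J), J full column rank), the SNGD iteration θ_{t+1} = θ_t − η J_Sᵀ(J_S J_Sᵀ + λI)⁻¹(H_S Jθ_t + q_S) is equal to θ_{t+1} = θ_t − η P(S) J⁺(HJθ_t + q), where P(S) = J_Sᵀ(J_S J_Sᵀ + λI)⁻¹ J_S and J⁺ = (JᵀJ)⁻¹Jᵀ. Equivalently, θ_{t+1} − θ* = (I − η P(S) J⁺HJ)(θ_t − θ*). -/
open Matrix

/-- Under strong consistency, the SNGD iteration for LLQ,
`θ_{t+1} = θ_t − η J_Sᵀ(J_SJ_Sᵀ + λI)⁻¹(H_SJθ_t + q_S)`, equals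
`θ_t − η P(S)J⁺(HJθ_t + q)`, and equivalently
`θ_{t+1} − θ* = (I − η P(S)J⁺HJ)(θ_t − θ*)`. -/
theorem stmt8 {m n : ℕ} (J : Matrix (Fin m) (Fin n) ℝ) (hrank : J.rank = n)
    (H : Matrix (Fin m) (Fin m) ℝ) (hH : H.PosDef)
    (q : Fin m → ℝ) (θs : Fin n → ℝ) (hθs : (H * J) *ᵥ θs + q = 0)
    (hrange : ∀ v : Fin n → ℝ, ∃ u : Fin n → ℝ, (H * J) *ᵥ v = J *ᵥ u)
    (lam η : ℝ) (hlam : 0 < lam) (hη : 0 < η)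
    (S : Finset (Fin m))
    (JS : Matrix {x // x ∈ S} (Fin n) ℝ) (hJS : JS = Matrix.of fun i j => J i.1 j)
    (HS : Matrix {x // x ∈ S} (Fin m) ℝ) (hHS : HS = Matrix.of fun i j => H i.1 j)
    (qS : {x // x ∈ S} → ℝ) (hqS : qS = fun i => q i.1)
    (PS : Matrix (Fin n) (Fin n) ℝ)
    (hPS : PS = JSᵀ * (JS * JSᵀ + lam • (1 : Matrix {x // x ∈ S} {x // x ∈ S} ℝ))⁻¹ * JS)
    (Jplus : Matrix (Fin n) (Fin m) ℝ) (hJplus : Jplus = (Jᵀ * J)⁻¹ * Jᵀ)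
    (θt θnext : Fin n → ℝ)
    (hupd : θnext = θt - η • (JSᵀ *ᵥ
      ((JS * JSᵀ + lam • (1 : Matrix {x // x ∈ S} {x // x ∈ S} ℝ))⁻¹ *ᵥ
        (HS *ᵥ (J *ᵥ θt) + qS)))) :
    θnext = θt - η • (PS *ᵥ (Jplus *ᵥ ((H * J) *ᵥ θt + q))) ∧
      θnext - θs =
        ((1 : Matrix (Fin n) (Fin n) ℝ) - η • (PS * (Jplus * (H * J)))) *ᵥ (θt - θs) := by
  set M := (JS * JSᵀ + lam • (1 : Matrix {x // x ∈ S} {x // x ∈ S} ℝ))⁻¹ with hM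
  -- Jᵀ * J is invertible
  have hker : LinearMap.ker (Jᵀ * J).mulVecLin = ⊥ := by
    rw [Matrix.ker_mulVecLin_transpose_mul_self]
    have h1 := LinearMap.finrank_range_add_finrank_ker J.mulVecLin
    have h2 : Module.finrank ℝ (Fin n → ℝ) = n := by simp
    have h3 : Module.finrank ℝ (LinearMap.range J.mulVecLin) = n := hrank
    have : Module.finrank ℝ (LinearMap.ker J.mulVecLin) = 0 := by omega
    exact Submodule.finrank_eq_zero.mp this
  have hinj : Function.Injective (Jᵀ * J).mulVec := by
    intro x y hxy
    have h0 : (Jᵀ * J).mulVecLin (x - y) = 0 := by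
      rw [Matrix.mulVecLin_apply, Matrix.mulVec_sub, hxy, sub_self]
    have := hker ▸ (LinearMap.mem_ker.mpr h0)
    simpa [sub_eq_zero] using this
  have hUnit : IsUnit (Jᵀ * J) := Matrix.mulVec_injective_iff_isUnit.mp hinj
  have hJpJ : Jplus * J = 1 := by
    rw [hJplus, Matrix.mul_assoc,
      Matrix.nonsing_inv_mul _ ((Matrix.isUnit_iff_isUnit_det _).mp hUnit)]
  have hw : (H * J) *ᵥ θt + q = (H * J) *ᵥ (θt - θs) := by
    have hq : (H * J) *ᵥ θs = -q := by
      rw [add_eq_zero_iff_eq_neg] at hθs; exact hθs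
    rw [Matrix.mulVec_sub, hq]; abel
  obtain ⟨u, hu⟩ := hrange (θt - θs)
  have hwu : (H * J) *ᵥ θt + q = J *ᵥ u := by rw [hw, hu]
  have hJpw : Jplus *ᵥ ((H * J) *ᵥ θt + q) = u := by
    rw [hwu, Matrix.mulVec_mulVec, hJpJ, Matrix.one_mulVec]
  have hres : HS *ᵥ (J *ᵥ θt) + qS = JS *ᵥ u := by
    funext i
    have hi : ((H * J) *ᵥ θt + q) i.1 = (J *ᵥ u) i.1 := by rw [hwu]
    subst hJS; subst hHS; subst hqS
    simp only [Pi.add_apply, Matrix.mulVec, Matrix.mul_apply, dotProduct,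
      Matrix.of_apply] at hi ⊢
    rw [← hi]
    congr 1
    simp_rw [Finset.mul_sum, Finset.sum_mul, mul_assoc]
    exact Finset.sum_comm ..
  have main : θnext = θt - η • (PS *ᵥ (Jplus *ᵥ ((H * J) *ᵥ θt + q))) := by
    rw [hupd, hJpw, hres, hPS]
    simp only [Matrix.mulVec_mulVec, Matrix.mul_assoc]
  refine ⟨main, ?_⟩
  rw [main, hw, Matrix.sub_mulVec, Matrix.one_mulVec, Matrix.smul_mulVec,
    Matrix.mulVec_mulVec, Matrix.mulVec_mulVec, Matrix.mul_assoc PS Jplus (H * J)]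
  abel
end

section
/- Let J ∈ ℝ^{m×n} have full column rank, H ∈ ℝ^{m×m} symmetric positive definite, and define M(λ) = P̄(λ) J⁺HJ where P̄(λ) = E_S[J_Sᵀ(J_S J_Sᵀ + λI)⁻¹J_S]. Then there exists λ₀ > 0 such that for all λ > λ₀, the symmetric part M(λ)ᵀ + M(λ) is positive semidefinite. -/
open Matrix

/-- The regularized projector `P(S) = J_Sᵀ(J_SJ_Sᵀ + λI)⁻¹J_S`. -/
noncomputable def Psub {m n : ℕ} (J : Matrix (Fin m) (Fin n) ℝ) (S : Finset (Fin m))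
    (lam : ℝ) : Matrix (Fin n) (Fin n) ℝ :=
  (Matrix.of fun (i : {x // x ∈ S}) (j : Fin n) => J i.1 j)ᵀ *
    ((Matrix.of fun (i : {x // x ∈ S}) (j : Fin n) => J i.1 j) *
        (Matrix.of fun (i : {x // x ∈ S}) (j : Fin n) => J i.1 j)ᵀ +
      lam • (1 : Matrix {x // x ∈ S} {x // x ∈ S} ℝ))⁻¹ *
    (Matrix.of fun (i : {x // x ∈ S}) (j : Fin n) => J i.1 j)

/-- `M(λ) = P̄(λ)J⁺HJ` where `P̄(λ)` is the expectation of the regularized projector over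
uniformly random size-`k` subsets. -/
noncomputable def Mlam {m n : ℕ} (J : Matrix (Fin m) (Fin n) ℝ)
    (H : Matrix (Fin m) (Fin m) ℝ) (k : ℕ) (lam : ℝ) : Matrix (Fin n) (Fin n) ℝ :=
  ((Nat.choose m k : ℝ)⁻¹ •
      ∑ S ∈ Finset.powersetCard k (Finset.univ : Finset (Fin m)), Psub J S lam) *
    ((Jᵀ * J)⁻¹ * Jᵀ * H * J)

/-! ### Auxiliary lemmas -/

lemma psd_smul {ι : Type*} [Fintype ι] {c : ℝ} (hc : 0 ≤ c) {A : Matrix ι ι ℝ}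
    (hA : A.PosSemidef) : (c • A).PosSemidef := by
  refine Matrix.PosSemidef.of_dotProduct_mulVec_nonneg ?_ (fun x => ?_)
  · unfold Matrix.IsHermitian
    rw [conjTranspose_smul, hA.1]
    simp
  · rw [smul_mulVec, dotProduct_smul, smul_eq_mul]
    exact mul_nonneg hc (hA.dotProduct_mulVec_nonneg x)

lemma pd_smul {ι : Type*} [Fintype ι] {c : ℝ} (hc : 0 < c) {A : Matrix ι ι ℝ}
    (hA : A.PosDef) : (c • A).PosDef := by
  refine Matrix.PosDef.of_dotProduct_mulVec_pos ?_ (fun x hx => ?_)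
  · unfold Matrix.IsHermitian
    rw [conjTranspose_smul, hA.1]
    simp
  · rw [smul_mulVec, dotProduct_smul, smul_eq_mul]
    exact mul_pos hc (hA.dotProduct_mulVec_pos hx)

lemma JtHJ_pd {m n : ℕ} (J : Matrix (Fin m) (Fin n) ℝ) (hinj : Function.Injective J.mulVecLin)
    (H : Matrix (Fin m) (Fin m) ℝ) (hH : H.PosDef) : (Jᵀ * H * J).PosDef := by
  have hsym : Hᵀ = H := by
    have := hH.1
    rwa [Matrix.IsHermitian, conjTranspose_eq_transpose_of_trivial] at this
  refine Matrix.PosDef.of_dotProduct_mulVec_pos ?_ (fun x hx => ?_)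
  · unfold Matrix.IsHermitian
    rw [conjTranspose_eq_transpose_of_trivial, transpose_mul, transpose_mul, transpose_transpose,
      hsym, Matrix.mul_assoc]
  · have hJx : J *ᵥ x ≠ 0 := by
      intro h
      apply hx
      apply hinj
      simpa [Matrix.mulVecLin_apply] using h
    have h2 := hH.dotProduct_mulVec_pos hJx
    rw [star_trivial] at h2 ⊢
    rw [Matrix.mul_assoc, ← Matrix.mulVec_mulVec, Matrix.dotProduct_mulVec,
      Matrix.vecMul_transpose, ← Matrix.mulVec_mulVec]
    exact h2

lemma rank_inj {m n : ℕ} (J : Matrix (Fin m) (Fin n) ℝ) (hrank : J.rank = n) :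
    Function.Injective J.mulVecLin := by
  rw [← LinearMap.ker_eq_bot]
  have h1 := LinearMap.finrank_range_add_finrank_ker J.mulVecLin
  rw [Matrix.rank] at hrank
  rw [hrank] at h1
  have hn : Module.finrank ℝ (Fin n → ℝ) = n := by simp
  rw [hn] at h1
  have hker : Module.finrank ℝ (LinearMap.ker J.mulVecLin) = 0 := by omega
  exact Submodule.finrank_eq_zero.mp hker

lemma count_mem {m k : ℕ} (hk : 1 ≤ k) (i : Fin m) :
    ((Finset.powersetCard k (Finset.univ : Finset (Fin m))).filter (fun S => i ∈ S)).card
      = (m - 1).choose (k - 1) := by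
  have hcard : (((Finset.univ : Finset (Fin m)).erase i).powersetCard (k-1)).card
      = (m-1).choose (k-1) := by
    rw [Finset.card_powersetCard, Finset.card_erase_of_mem (Finset.mem_univ i),
      Finset.card_univ, Fintype.card_fin]
  rw [← hcard]
  refine Finset.card_nbij' (fun S => S.erase i) (fun T => insert i T) ?_ ?_ ?_ ?_
  · intro S hS
    simp only [Finset.mem_coe, Finset.mem_filter, Finset.mem_powersetCard] at hS
    rw [Finset.mem_coe, Finset.mem_powersetCard]
    exact ⟨Finset.erase_subset_erase i (Finset.subset_univ S),
      by rw [Finset.card_erase_of_mem hS.2, hS.1.2]⟩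
  · intro T hT
    rw [Finset.mem_coe, Finset.mem_powersetCard] at hT
    have hiT : i ∉ T := fun h => (Finset.notMem_erase i _) (hT.1 h)
    simp only [Finset.mem_coe, Finset.mem_filter, Finset.mem_powersetCard]
    refine ⟨⟨Finset.subset_univ _, ?_⟩, Finset.mem_insert_self i T⟩
    rw [Finset.card_insert_of_notMem hiT, hT.2]
    omega
  · intro S hS
    simp only [Finset.mem_coe, Finset.mem_filter] at hS
    exact Finset.insert_erase hS.2
  · intro T hT
    rw [Finset.mem_coe, Finset.mem_powersetCard] at hT
    exact Finset.erase_insert (fun h => (Finset.notMem_erase i _) (hT.1 h))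

lemma sum_JtJ {m n k : ℕ} (hk : 1 ≤ k) (J : Matrix (Fin m) (Fin n) ℝ) :
    ∑ S ∈ Finset.powersetCard k (Finset.univ : Finset (Fin m)),
        (Matrix.of fun (i : {x // x ∈ S}) (j : Fin n) => J i.1 j)ᵀ *
          (Matrix.of fun (i : {x // x ∈ S}) (j : Fin n) => J i.1 j)
      = (((m-1).choose (k-1) : ℕ) : ℝ) • (Jᵀ * J) := by
  ext a b
  rw [Matrix.sum_apply]
  simp only [Matrix.smul_apply, Matrix.mul_apply, Matrix.transpose_apply, Matrix.of_apply,
    smul_eq_mul]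
  have step1 : ∀ S ∈ Finset.powersetCard k (Finset.univ : Finset (Fin m)),
      (∑ i : {x // x ∈ S}, J i.1 a * J i.1 b) = ∑ i ∈ S, J i a * J i b := by
    intro S _
    exact Finset.sum_coe_sort S (fun i => J i a * J i b)
  rw [Finset.sum_congr rfl step1]
  have step2 : ∀ S : Finset (Fin m), (∑ i ∈ S, J i a * J i b)
      = ∑ i : Fin m, if i ∈ S then J i a * J i b else 0 := by
    intro S
    rw [Finset.sum_ite_mem, Finset.univ_inter]
  rw [Finset.sum_congr rfl (fun S _ => step2 S), Finset.sum_comm]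
  rw [Finset.mul_sum]
  congr 1
  ext i
  rw [← Finset.sum_filter, Finset.sum_const, count_mem hk i, nsmul_eq_mul]

/-- The `μ = 1/λ` version of the regularized projector, scaled by `λ`. -/
noncomputable def Qm {m n : ℕ} (J : Matrix (Fin m) (Fin n) ℝ) (S : Finset (Fin m))
    (mu : ℝ) : Matrix (Fin n) (Fin n) ℝ :=
  (Matrix.of fun (i : {x // x ∈ S}) (j : Fin n) => J i.1 j)ᵀ *
    (mu • ((Matrix.of fun (i : {x // x ∈ S}) (j : Fin n) => J i.1 j) *
        (Matrix.of fun (i : {x // x ∈ S}) (j : Fin n) => J i.1 j)ᵀ) +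
      (1 : Matrix {x // x ∈ S} {x // x ∈ S} ℝ))⁻¹ *
    (Matrix.of fun (i : {x // x ∈ S}) (j : Fin n) => J i.1 j)

/-- `λ • M(λ)` as a function of `μ = 1/λ`. -/
noncomputable def Fm {m n : ℕ} (J : Matrix (Fin m) (Fin n) ℝ)
    (H : Matrix (Fin m) (Fin m) ℝ) (k : ℕ) (mu : ℝ) : Matrix (Fin n) (Fin n) ℝ :=
  ((Nat.choose m k : ℝ)⁻¹ •
      ∑ S ∈ Finset.powersetCard k (Finset.univ : Finset (Fin m)), Qm J S mu) *
    ((Jᵀ * J)⁻¹ * Jᵀ * H * J)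

lemma gram_psd {m n : ℕ} (J : Matrix (Fin m) (Fin n) ℝ) (S : Finset (Fin m)) :
    ((Matrix.of fun (i : {x // x ∈ S}) (j : Fin n) => J i.1 j) *
        (Matrix.of fun (i : {x // x ∈ S}) (j : Fin n) => J i.1 j)ᵀ).PosSemidef := by
  rw [← Matrix.conjTranspose_eq_transpose_of_trivial]
  exact Matrix.posSemidef_self_mul_conjTranspose _

lemma reg_pd {m n : ℕ} (J : Matrix (Fin m) (Fin n) ℝ) (S : Finset (Fin m)) {mu : ℝ}
    (hmu : 0 ≤ mu) :
    (mu • ((Matrix.of fun (i : {x // x ∈ S}) (j : Fin n) => J i.1 j) *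
        (Matrix.of fun (i : {x // x ∈ S}) (j : Fin n) => J i.1 j)ᵀ) +
      (1 : Matrix {x // x ∈ S} {x // x ∈ S} ℝ)).PosDef :=
  Matrix.PosDef.posSemidef_add (psd_smul hmu (gram_psd J S)) Matrix.PosDef.one

lemma psub_scale {m n : ℕ} (J : Matrix (Fin m) (Fin n) ℝ) (S : Finset (Fin m)) {lam : ℝ}
    (hlam : 0 < lam) : Psub J S lam = lam⁻¹ • Qm J S lam⁻¹ := by
  set JS := (Matrix.of fun (i : {x // x ∈ S}) (j : Fin n) => J i.1 j) with hJS
  set A := JS * JSᵀ with hA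
  set B := lam⁻¹ • A + 1 with hB
  have hBpd : B.PosDef := reg_pd J S (by positivity)
  have hBdet : IsUnit B.det := (Matrix.isUnit_iff_isUnit_det B).mp hBpd.isUnit
  have key : A + lam • (1 : Matrix {x // x ∈ S} {x // x ∈ S} ℝ) = lam • B := by
    rw [hB, smul_add, smul_smul, mul_inv_cancel₀ hlam.ne', one_smul]
  have hinv : (A + lam • (1 : Matrix {x // x ∈ S} {x // x ∈ S} ℝ))⁻¹ = lam⁻¹ • B⁻¹ := by
    rw [key]
    apply Matrix.inv_eq_right_inv
    rw [Matrix.smul_mul, Matrix.mul_smul, smul_smul, mul_inv_cancel₀ hlam.ne',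
      Matrix.mul_nonsing_inv B hBdet, one_smul]
  show JSᵀ * (A + lam • (1 : Matrix {x // x ∈ S} {x // x ∈ S} ℝ))⁻¹ * JS = lam⁻¹ • Qm J S lam⁻¹
  rw [hinv, Matrix.mul_smul, Matrix.smul_mul]
  rfl

lemma mlam_scale {m n : ℕ} (J : Matrix (Fin m) (Fin n) ℝ) (H : Matrix (Fin m) (Fin m) ℝ)
    (k : ℕ) {lam : ℝ} (hlam : 0 < lam) : Mlam J H k lam = lam⁻¹ • Fm J H k lam⁻¹ := by
  unfold Mlam Fm
  rw [Finset.sum_congr rfl (fun S _ => psub_scale J S hlam), ← Finset.smul_sum,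
    smul_comm ((Nat.choose m k : ℝ)⁻¹) (lam⁻¹), Matrix.smul_mul]

lemma contAt_mmul {X : Type*} [TopologicalSpace X] {α β γ : Type*} [Fintype β]
    {f : X → Matrix α β ℝ} {g : X → Matrix β γ ℝ} {a : X} (hf : ContinuousAt f a)
    (hg : ContinuousAt g a) : ContinuousAt (fun x => f x * g x) a := by
  have h : Continuous (fun p : Matrix α β ℝ × Matrix β γ ℝ => p.1 * p.2) :=
    Continuous.matrix_mul continuous_fst continuous_snd
  exact h.continuousAt.comp (hf.prodMk hg)

lemma Fm_contAt {m n : ℕ} (J : Matrix (Fin m) (Fin n) ℝ) (H : Matrix (Fin m) (Fin m) ℝ)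
    (k : ℕ) : ContinuousAt (Fm J H k) 0 := by
  apply contAt_mmul _ continuousAt_const
  refine ContinuousAt.const_smul (g := fun x => ∑ S ∈ Finset.powersetCard k (Finset.univ : Finset (Fin m)), Qm J S x) ?_ ((Nat.choose m k : ℝ)⁻¹)
  apply tendsto_finset_sum
  intro S _
  show ContinuousAt (fun mu => Qm J S mu) 0
  unfold Qm
  apply contAt_mmul (contAt_mmul continuousAt_const ?_) continuousAt_const
  set G := (Matrix.of fun (i : {x // x ∈ S}) (j : Fin n) => J i.1 j) *
      (Matrix.of fun (i : {x // x ∈ S}) (j : Fin n) => J i.1 j)ᵀ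
  have h1 : ContinuousAt (fun mu : ℝ => mu • G + 1) 0 :=
    ((continuous_id.smul continuous_const).add continuous_const).continuousAt
  have h2 : ContinuousAt (Inv.inv : Matrix {x // x ∈ S} {x // x ∈ S} ℝ → _)
      ((fun mu : ℝ => mu • G + 1) 0) := by
    show ContinuousAt Inv.inv ((0:ℝ) • G + 1)
    have e : (0:ℝ) • G + 1 = (1 : Matrix {x // x ∈ S} {x // x ∈ S} ℝ) := by simp
    rw [e]
    apply continuousAt_matrix_inv
    rw [Matrix.det_one]
    exact NormedRing.inverse_continuousAt (1 : ℝˣ)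
  exact ContinuousAt.comp (f := fun mu : ℝ => mu • G + 1) h2 h1

lemma quad_bound {n : ℕ} (D : Matrix (Fin n) (Fin n) ℝ) (x : Fin n → ℝ) :
    |x ⬝ᵥ D *ᵥ x| ≤ (∑ a, ∑ b, |D a b|) * (‖x‖ * ‖x‖) := by
  have hxb : ∀ i, |x i| ≤ ‖x‖ := by
    intro i
    rw [← Real.norm_eq_abs]
    exact norm_le_pi_norm x i
  have hx0 : (0:ℝ) ≤ ‖x‖ := norm_nonneg x
  calc |x ⬝ᵥ D *ᵥ x| = |∑ a, x a * (D *ᵥ x) a| := rfl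
    _ ≤ ∑ a, |x a * (D *ᵥ x) a| := Finset.abs_sum_le_sum_abs _ _
    _ ≤ ∑ a, (∑ b, |D a b|) * (‖x‖ * ‖x‖) := by
        apply Finset.sum_le_sum
        intro a _
        rw [abs_mul]
        have hDa : |(D *ᵥ x) a| ≤ (∑ b, |D a b|) * ‖x‖ := by
          calc |(D *ᵥ x) a| = |∑ b, D a b * x b| := rfl
            _ ≤ ∑ b, |D a b * x b| := Finset.abs_sum_le_sum_abs _ _
            _ ≤ ∑ b, |D a b| * ‖x‖ := by
                apply Finset.sum_le_sum
                intro b _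
                rw [abs_mul]
                exact mul_le_mul_of_nonneg_left (hxb b) (abs_nonneg _)
            _ = (∑ b, |D a b|) * ‖x‖ := by rw [Finset.sum_mul]
        calc |x a| * |(D *ᵥ x) a| ≤ ‖x‖ * ((∑ b, |D a b|) * ‖x‖) := by
              apply mul_le_mul (hxb a) hDa (abs_nonneg _) hx0
          _ = (∑ b, |D a b|) * (‖x‖ * ‖x‖) := by ring
    _ = (∑ a, ∑ b, |D a b|) * (‖x‖ * ‖x‖) := by rw [Finset.sum_mul]

lemma exists_quad_lb {n : ℕ} (hn : 0 < n) {A : Matrix (Fin n) (Fin n) ℝ} (hA : A.PosDef) :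
    ∃ c : ℝ, 0 < c ∧ ∀ x : Fin n → ℝ, c * (‖x‖ * ‖x‖) ≤ x ⬝ᵥ A *ᵥ x := by
  haveI : Nonempty (Fin n) := ⟨⟨0, hn⟩⟩
  have hcont : Continuous fun x : Fin n → ℝ => x ⬝ᵥ A *ᵥ x := by
    simp only [dotProduct, Matrix.mulVec]
    exact continuous_finset_sum _ fun a _ => (continuous_apply a).mul
      (continuous_finset_sum _ fun b _ => continuous_const.mul (continuous_apply b))
  have hsph : IsCompact (Metric.sphere (0 : Fin n → ℝ) 1) := isCompact_sphere 0 1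
  have hne : (Metric.sphere (0 : Fin n → ℝ) 1).Nonempty := by
    refine ⟨fun _ => 1, ?_⟩
    rw [Metric.mem_sphere, dist_zero_right]
    rw [pi_norm_const]
    exact norm_one
  obtain ⟨x₀, hx₀mem, hx₀min⟩ := hsph.exists_isMinOn hne hcont.continuousOn
  have hx₀norm : ‖x₀‖ = 1 := by
    rw [Metric.mem_sphere, dist_zero_right] at hx₀mem
    exact hx₀mem
  have hx₀ne : x₀ ≠ 0 := fun h => by simp [h] at hx₀norm
  refine ⟨x₀ ⬝ᵥ A *ᵥ x₀, by simpa [star_trivial] using hA.dotProduct_mulVec_pos hx₀ne, fun x => ?_⟩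
  rcases eq_or_ne x 0 with rfl | hx
  · simp
  · have hxn : (0:ℝ) < ‖x‖ := norm_pos_iff.mpr hx
    set u := ‖x‖⁻¹ • x with hu
    have hunorm : ‖u‖ = 1 := by
      rw [hu, norm_smul, norm_inv, norm_norm, inv_mul_cancel₀ hxn.ne']
    have humem : u ∈ Metric.sphere (0 : Fin n → ℝ) 1 := by
      rw [Metric.mem_sphere, dist_zero_right]; exact hunorm
    have hmin : x₀ ⬝ᵥ A *ᵥ x₀ ≤ u ⬝ᵥ A *ᵥ u := hx₀min humem
    have hxu : x = ‖x‖ • u := by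
      rw [hu, smul_smul, mul_inv_cancel₀ hxn.ne', one_smul]
    have hquad : x ⬝ᵥ A *ᵥ x = (‖x‖ * ‖x‖) * (u ⬝ᵥ A *ᵥ u) := by
      conv_lhs => rw [hxu]
      rw [smul_dotProduct, Matrix.mulVec_smul, dotProduct_smul]
      simp [smul_eq_mul]; ring
    rw [hquad, mul_comm]
    exact mul_le_mul_of_nonneg_left hmin (by positivity)

/-- If `J` has full column rank and `H` is symmetric positive definite, then there exists
`λ₀ > 0` such that for all `λ > λ₀` the symmetric part `M(λ)ᵀ + M(λ)` is PSD. -/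
theorem stmt11 {m n k : ℕ} (J : Matrix (Fin m) (Fin n) ℝ) (hrank : J.rank = n)
    (H : Matrix (Fin m) (Fin m) ℝ) (hH : H.PosDef) (hm : 0 < m) (hk : k ≤ m) :
    ∃ lam0 : ℝ, 0 < lam0 ∧ ∀ lam : ℝ, lam0 < lam →
      ((Mlam J H k lam)ᵀ + Mlam J H k lam).PosSemidef := by
  rcases Nat.eq_zero_or_pos n with hn | hn
  · refine ⟨1, one_pos, fun lam _ => ?_⟩
    subst hn
    exact Matrix.PosSemidef.of_dotProduct_mulVec_nonneg (Subsingleton.elim _ _) (fun x => by simp [dotProduct])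
  rcases Nat.eq_zero_or_pos k with hk0 | hk1
  · subst hk0
    refine ⟨1, one_pos, fun lam _ => ?_⟩
    have hzero : Mlam J H 0 lam = 0 := by
      unfold Mlam
      rw [Finset.powersetCard_zero, Finset.sum_singleton]
      have hP : Psub J ∅ lam = 0 := by
        haveI : IsEmpty {x // x ∈ (∅ : Finset (Fin m))} :=
          ⟨fun x => Finset.notMem_empty _ x.2⟩
        ext a b
        simp [Psub, Matrix.mul_apply]
      rw [hP, smul_zero, Matrix.zero_mul]
    rw [hzero]
    simpa using Matrix.PosSemidef.zero
  -- main case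
  have hinj := rank_inj J hrank
  have hJtJpd : (Jᵀ * J).PosDef := by
    have h := JtHJ_pd J hinj 1 Matrix.PosDef.one
    rwa [Matrix.mul_one] at h
  have hJtJdet : IsUnit (Jᵀ * J).det := (Matrix.isUnit_iff_isUnit_det _).mp hJtJpd.isUnit
  have hJHJ : (Jᵀ * H * J).PosDef := JtHJ_pd J hinj H hH
  have hsymJHJ : (Jᵀ * H * J)ᵀ = Jᵀ * H * J := by
    have h := hJHJ.1
    rwa [Matrix.IsHermitian, conjTranspose_eq_transpose_of_trivial] at h
  set c₁ : ℝ := (Nat.choose m k : ℝ)⁻¹ * (((m-1).choose (k-1) : ℕ) : ℝ) with hc₁def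
  have hc₁ : 0 < c₁ := by
    apply mul_pos
    · rw [inv_pos]
      exact_mod_cast Nat.choose_pos hk
    · exact_mod_cast Nat.choose_pos (Nat.sub_le_sub_right hk 1)
  have hF0 : Fm J H k 0 = c₁ • (Jᵀ * H * J) := by
    unfold Fm
    have hQ0 : ∀ S ∈ Finset.powersetCard k (Finset.univ : Finset (Fin m)),
        Qm J S 0 = (Matrix.of fun (i : {x // x ∈ S}) (j : Fin n) => J i.1 j)ᵀ *
          (Matrix.of fun (i : {x // x ∈ S}) (j : Fin n) => J i.1 j) := by
      intro S _
      unfold Qm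
      rw [zero_smul, zero_add, inv_one, Matrix.mul_one]
    rw [Finset.sum_congr rfl hQ0, sum_JtJ hk1 J, smul_smul, ← hc₁def, Matrix.smul_mul]
    congr 1
    simp only [← Matrix.mul_assoc]
    rw [Matrix.mul_nonsing_inv _ hJtJdet, Matrix.one_mul]
  set f : ℝ → Matrix (Fin n) (Fin n) ℝ := fun mu => (Fm J H k mu)ᵀ + Fm J H k mu with hfdef
  have hf0 : f 0 = (2 * c₁) • (Jᵀ * H * J) := by
    rw [hfdef]
    simp only
    rw [hF0, Matrix.transpose_smul, hsymJHJ, ← add_smul, ← two_mul]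
  have hA0pd : (f 0).PosDef := by
    rw [hf0]
    exact pd_smul (by positivity) hJHJ
  obtain ⟨c, hc, hlb⟩ := exists_quad_lb hn hA0pd
  have hFc := Fm_contAt J H k
  have hfc : ContinuousAt f 0 := by
    apply ContinuousAt.add ?_ hFc
    exact (Continuous.matrix_transpose continuous_id).continuousAt.comp hFc
  set g : ℝ → ℝ := fun mu => ∑ a, ∑ b, |(f mu - f 0) a b| with hgdef
  have hentry : ∀ a b : Fin n, ContinuousAt (fun mu => f mu a b) 0 := fun a b =>
    (Continuous.matrix_elem continuous_id a b).continuousAt.comp hfc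
  have hgc : ContinuousAt g 0 := by
    apply tendsto_finset_sum
    intro a _
    apply tendsto_finset_sum
    intro b _
    show ContinuousAt (fun mu => |(f mu - f 0) a b|) 0
    simp only [Matrix.sub_apply]
    exact ((hentry a b).sub continuousAt_const).abs
  have hg0 : g 0 = 0 := by
    simp [hgdef]
  have hmem : g ⁻¹' (Set.Iio c) ∈ nhds (0:ℝ) := by
    apply hgc
    rw [hg0]
    exact Iio_mem_nhds hc
  obtain ⟨ε, hε, hball⟩ := Metric.mem_nhds_iff.mp hmem
  refine ⟨max ε⁻¹ 1, lt_max_of_lt_right one_pos, fun lam hlam => ?_⟩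
  have hlam1 : (1:ℝ) < lam := lt_of_le_of_lt (le_max_right _ _) hlam
  have hlampos : (0:ℝ) < lam := lt_trans one_pos hlam1
  have hmupos : (0:ℝ) < lam⁻¹ := inv_pos.mpr hlampos
  have hmuball : lam⁻¹ ∈ Metric.ball (0:ℝ) ε := by
    rw [Metric.mem_ball, Real.dist_eq, sub_zero, abs_of_pos hmupos]
    rw [inv_lt_comm₀ hlampos hε]
    exact lt_of_le_of_lt (le_max_left _ _) hlam
  have hgmu : g lam⁻¹ < c := hball hmuball
  rw [mlam_scale J H k hlampos, Matrix.transpose_smul, ← smul_add]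
  apply psd_smul (inv_nonneg.mpr hlampos.le)
  show (f lam⁻¹).PosSemidef
  refine Matrix.PosSemidef.of_dotProduct_mulVec_nonneg ?_ (fun x => ?_)
  · rw [Matrix.IsHermitian, conjTranspose_eq_transpose_of_trivial, hfdef]
    simp only
    rw [Matrix.transpose_add, Matrix.transpose_transpose, add_comm]
  · rw [star_trivial]
    have hdecomp : f lam⁻¹ = f 0 + (f lam⁻¹ - f 0) := by abel
    rw [hdecomp, Matrix.add_mulVec, dotProduct_add]
    have hbd := quad_bound (f lam⁻¹ - f 0) x
    have hmain := hlb x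
    have habs : -(g lam⁻¹ * (‖x‖ * ‖x‖)) ≤ x ⬝ᵥ (f lam⁻¹ - f 0) *ᵥ x := by
      have := neg_abs_le (x ⬝ᵥ (f lam⁻¹ - f 0) *ᵥ x)
      have h2 : -(g lam⁻¹ * (‖x‖ * ‖x‖)) ≤ -|x ⬝ᵥ (f lam⁻¹ - f 0) *ᵥ x| := by
        apply neg_le_neg
        exact hbd
      linarith
    have hs : (0:ℝ) ≤ ‖x‖ * ‖x‖ := by positivity
    have hfin : 0 ≤ (c - g lam⁻¹) * (‖x‖ * ‖x‖) :=
      mul_nonneg (by linarith) hs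
    nlinarith
end

section
/- Let J ∈ ℝ^{m×n} have full column rank, H ∈ ℝ^{m×m} symmetric positive definite, and H̃ = (JᵀJ)^{-1/2} JᵀHJ (JᵀJ)^{-1/2}. Consider NGD: θ_{t+1} = θ_t − η J⁺(HJθ_t + q) with η = 1/λ_max(H̃), under the consistency assumption HJθ* + q = 0. Then ‖θ_t − θ*‖_{JᵀJ} ≤ (1 − κ⁻¹(H̃))^t ‖θ_0 − θ*‖_{JᵀJ}, where κ(H̃) = λ_max(H̃)/λ_min(H̃) and ‖x‖²_{JᵀJ} = xᵀJᵀJx. -/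
open Matrix

private lemma conj_posDef {p q : Type*} [Fintype p] [Fintype q]
    {A : Matrix p p ℝ} (hA : A.PosDef) (B : Matrix p q ℝ)
    (hB : Function.Injective B.mulVec) : (Bᵀ * A * B).PosDef := by
  have hBt : Bᴴ = Bᵀ := Matrix.conjTranspose_eq_transpose_of_trivial B
  refine Matrix.PosDef.of_dotProduct_mulVec_pos ?_ ?_
  · rw [← hBt]; exact Matrix.isHermitian_conjTranspose_mul_mul B hA.1
  · intro x hx
    have hBx : B *ᵥ x ≠ 0 := fun h => hx (hB (h.trans (Matrix.mulVec_zero B).symm))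
    have h := hA.dotProduct_mulVec_pos hBx
    rw [← hBt]
    simpa only [star_mulVec, dotProduct_mulVec, vecMul_vecMul, Matrix.mul_assoc] using h

/-- Convergence of NGD for consistent linear least-quadratics: with
`H̃ = (JᵀJ)^{-1/2}JᵀHJ(JᵀJ)^{-1/2}`, step size `η = 1/λ_max(H̃)`, and `HJθ* + q = 0`,
the NGD iterates satisfy `‖θ_t − θ*‖_{JᵀJ} ≤ (1 − κ⁻¹(H̃))^t ‖θ_0 − θ*‖_{JᵀJ}`. -/
theorem stmt12 {m n : ℕ} (hn : 0 < n) (J : Matrix (Fin m) (Fin n) ℝ) (hrank : J.rank = n)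
    (H : Matrix (Fin m) (Fin m) ℝ) (hH : H.PosDef)
    (q : Fin m → ℝ) (θs : Fin n → ℝ) (hθs : (H * J) *ᵥ θs + q = 0)
    -- `R` is the symmetric positive definite square root of `JᵀJ`
    (R : Matrix (Fin n) (Fin n) ℝ) (hRpd : R.PosDef) (hRR : R * R = Jᵀ * J)
    (Htil : Matrix (Fin n) (Fin n) ℝ) (hHtil : Htil = R⁻¹ * (Jᵀ * H * J) * R⁻¹)
    (hHtH : Htil.IsHermitian)
    (lmax lmin : ℝ) (hlmax : lmax = ⨆ i, hHtH.eigenvalues i)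
    (hlmin : lmin = ⨅ i, hHtH.eigenvalues i)
    (θ : ℕ → Fin n → ℝ)
    (hθ : ∀ t, θ (t + 1) =
      θ t - (1 / lmax) • (((Jᵀ * J)⁻¹ * Jᵀ) *ᵥ ((H * J) *ᵥ θ t + q))) :
    ∀ t : ℕ,
      Real.sqrt ((θ t - θs) ⬝ᵥ ((Jᵀ * J) *ᵥ (θ t - θs))) ≤
        (1 - lmin / lmax) ^ t *
          Real.sqrt ((θ 0 - θs) ⬝ᵥ ((Jᵀ * J) *ᵥ (θ 0 - θs))) := by
  classical
  set d : Fin n → ℝ := hHtH.eigenvalues with hd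
  set U : Matrix (Fin n) (Fin n) ℝ := (hHtH.eigenvectorUnitary : Matrix (Fin n) (Fin n) ℝ)
    with hU
  set W : Matrix (Fin n) (Fin n) ℝ := star U with hW
  have hWU : W * U = 1 := Unitary.coe_star_mul_self _
  have hUW : U * W = 1 := Unitary.coe_mul_star_self _
  have hspec : Htil = U * Matrix.diagonal d * W := by
    have h := hHtH.spectral_theorem
    simpa using h
  -- R is invertible and symmetric
  have hRu : IsUnit R := hRpd.isUnit
  have hRdet : IsUnit R.det := (Matrix.isUnit_iff_isUnit_det R).mp hRu
  have hRRinv : R * R⁻¹ = 1 := Matrix.mul_nonsing_inv R hRdet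
  have hRinvR : R⁻¹ * R = 1 := Matrix.nonsing_inv_mul R hRdet
  have hRsym : Rᵀ = R := by
    have h := hRpd.isHermitian
    rwa [Matrix.IsHermitian, Matrix.conjTranspose_eq_transpose_of_trivial] at h
  have hRinvsym : (R⁻¹)ᵀ = R⁻¹ := by rw [Matrix.transpose_nonsing_inv, hRsym]
  -- J has injective mulVec
  have hJTJu : IsUnit (Jᵀ * J) := by rw [← hRR]; exact hRu.mul hRu
  have hJinj : Function.Injective J.mulVec := by
    have hinj2 : Function.Injective (Jᵀ * J).mulVec :=
      Matrix.mulVec_injective_iff_isUnit.mpr hJTJu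
    intro x y hxy
    apply hinj2
    rw [← Matrix.mulVec_mulVec, ← Matrix.mulVec_mulVec, hxy]
  -- Htil is positive definite
  have hJHJ : (Jᵀ * H * J).PosDef := conj_posDef hH J hJinj
  have hRinv_inj : Function.Injective (R⁻¹).mulVec :=
    Matrix.mulVec_injective_iff_isUnit.mpr hRpd.inv.isUnit
  have hHtilPD : Htil.PosDef := by
    have h := conj_posDef hJHJ R⁻¹ hRinv_inj
    rwa [hRinvsym, ← hHtil] at h
  -- eigenvalue bounds
  have hdpos : ∀ i, 0 < d i := fun i => hHtilPD.eigenvalues_pos i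
  have i0 : Fin n := ⟨0, hn⟩
  have hle_lmax : ∀ i, d i ≤ lmax := fun i =>
    hlmax ▸ le_ciSup (Set.finite_range d).bddAbove i
  have hlmin_le : ∀ i, lmin ≤ d i := fun i =>
    hlmin ▸ ciInf_le (Set.finite_range d).bddBelow i
  have hlmax_pos : 0 < lmax := lt_of_lt_of_le (hdpos i0) (hle_lmax i0)
  have hminmax : lmin ≤ lmax := (hlmin_le i0).trans (hle_lmax i0)
  have hc0 : 0 ≤ 1 - lmin / lmax := by
    have h1 : lmin / lmax ≤ 1 := (div_le_one hlmax_pos).mpr hminmax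
    linarith
  have hkey : ∀ i, -(1 - lmin / lmax) ≤ 1 - d i / lmax ∧
      1 - d i / lmax ≤ 1 - lmin / lmax := by
    intro i
    constructor
    · have h1 : d i / lmax ≤ 1 := (div_le_one hlmax_pos).mpr (hle_lmax i)
      linarith
    · have h1 : lmin / lmax ≤ d i / lmax :=
        div_le_div_of_nonneg_right (hlmin_le i) hlmax_pos.le
      linarith
  -- error vectors
  set e : ℕ → Fin n → ℝ := fun t => θ t - θs with he
  set v : ℕ → Fin n → ℝ := fun t => W *ᵥ (R *ᵥ e t) with hv
  have hq : q = -((H * J) *ᵥ θs) := by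
    rw [eq_neg_iff_add_eq_zero, add_comm]; exact hθs
  -- matrix identity:  W * R * ((JᵀJ)⁻¹ * Jᵀ * (H*J)) = diagonal d * (W * R)
  have hinvJTJ : (Jᵀ * J)⁻¹ = R⁻¹ * R⁻¹ := by rw [← hRR, Matrix.mul_inv_rev]
  have h1 : R * ((Jᵀ * J)⁻¹ * Jᵀ * (H * J)) = R⁻¹ * (Jᵀ * H * J) := by
    rw [hinvJTJ]
    calc R * (R⁻¹ * R⁻¹ * Jᵀ * (H * J))
        = (R * R⁻¹) * (R⁻¹ * (Jᵀ * (H * J))) := by simp only [Matrix.mul_assoc]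
      _ = R⁻¹ * (Jᵀ * (H * J)) := by rw [hRRinv, one_mul]
      _ = R⁻¹ * (Jᵀ * H * J) := by simp only [Matrix.mul_assoc]
  have h2 : Htil * R = R⁻¹ * (Jᵀ * H * J) := by
    rw [hHtil]
    calc R⁻¹ * (Jᵀ * H * J) * R⁻¹ * R
        = R⁻¹ * (Jᵀ * H * J) * (R⁻¹ * R) := by rw [Matrix.mul_assoc]
      _ = R⁻¹ * (Jᵀ * H * J) := by rw [hRinvR, Matrix.mul_one]
  have hWHtil : W * Htil = Matrix.diagonal d * W := by
    rw [hspec, ← Matrix.mul_assoc, ← Matrix.mul_assoc, hWU, one_mul]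
  have hmatkey : W * R * ((Jᵀ * J)⁻¹ * Jᵀ * (H * J)) = Matrix.diagonal d * (W * R) := by
    calc W * R * ((Jᵀ * J)⁻¹ * Jᵀ * (H * J))
        = W * (R * ((Jᵀ * J)⁻¹ * Jᵀ * (H * J))) := by rw [Matrix.mul_assoc]
      _ = W * (Htil * R) := by rw [h1, ← h2]
      _ = (W * Htil) * R := by rw [Matrix.mul_assoc]
      _ = Matrix.diagonal d * W * R := by rw [hWHtil]
      _ = Matrix.diagonal d * (W * R) := by rw [Matrix.mul_assoc]
  -- recurrence for v
  have hrec : ∀ t, v (t + 1) = fun i => (1 - d i / lmax) * v t i := by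
    intro t
    have hh : (H * J) *ᵥ θ t + q = (H * J) *ᵥ (θ t - θs) := by
      rw [hq, ← sub_eq_add_neg, ← Matrix.mulVec_sub]
    have he1 : e (t + 1) = e t - (1 / lmax) • (((Jᵀ * J)⁻¹ * Jᵀ * (H * J)) *ᵥ e t) := by
      simp only [he]
      rw [hθ t, hh, Matrix.mulVec_mulVec, sub_right_comm]
    have hv1 : v (t + 1) = v t - (1 / lmax) • (Matrix.diagonal d *ᵥ v t) := by
      simp only [hv, he1, Matrix.mulVec_sub, Matrix.mulVec_smul, Matrix.mulVec_mulVec]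
      rw [hmatkey]
    funext i
    rw [hv1]
    simp only [Pi.sub_apply, Pi.smul_apply, Matrix.mulVec_diagonal, smul_eq_mul]
    ring
  -- norm identity
  have hWnorm : ∀ u : Fin n → ℝ, (W *ᵥ u) ⬝ᵥ (W *ᵥ u) = u ⬝ᵥ u := by
    intro u
    have hWt : Wᵀ * W = 1 := by
      have : Wᵀ = U := by
        rw [hW, Matrix.star_eq_conjTranspose, Matrix.conjTranspose_eq_transpose_of_trivial,
          Matrix.transpose_transpose]
      rw [this, hUW]
    rw [Matrix.dotProduct_mulVec, ← Matrix.mulVec_transpose, Matrix.mulVec_mulVec, hWt,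
      Matrix.one_mulVec]
  have hRvec : ∀ x : Fin n → ℝ, x ᵥ* R = R *ᵥ x := by
    intro x
    conv_lhs => rw [← hRsym]
    rw [Matrix.vecMul_transpose]
  have hnorm : ∀ t, (θ t - θs) ⬝ᵥ ((Jᵀ * J) *ᵥ (θ t - θs)) = v t ⬝ᵥ v t := by
    intro t
    calc (θ t - θs) ⬝ᵥ ((Jᵀ * J) *ᵥ (θ t - θs))
        = e t ⬝ᵥ ((R * R) *ᵥ e t) := by rw [← hRR]
      _ = e t ⬝ᵥ (R *ᵥ (R *ᵥ e t)) := by rw [← Matrix.mulVec_mulVec]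
      _ = (e t ᵥ* R) ⬝ᵥ (R *ᵥ e t) := by rw [Matrix.dotProduct_mulVec]
      _ = (R *ᵥ e t) ⬝ᵥ (R *ᵥ e t) := by rw [hRvec]
      _ = (W *ᵥ (R *ᵥ e t)) ⬝ᵥ (W *ᵥ (R *ᵥ e t)) := (hWnorm _).symm
      _ = v t ⬝ᵥ v t := rfl
  -- the main induction on v
  have hmain : ∀ t, Real.sqrt (v t ⬝ᵥ v t) ≤ (1 - lmin / lmax) ^ t * Real.sqrt (v 0 ⬝ᵥ v 0) := by
    intro t
    induction t with
    | zero => simp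
    | succ t ih =>
      have hstep : Real.sqrt (v (t + 1) ⬝ᵥ v (t + 1)) ≤ (1 - lmin / lmax) * Real.sqrt (v t ⬝ᵥ v t) := by
        have hle : v (t + 1) ⬝ᵥ v (t + 1) ≤ (1 - lmin / lmax) ^ 2 * (v t ⬝ᵥ v t) := by
          rw [hrec t]
          simp only [dotProduct, Finset.mul_sum]
          apply Finset.sum_le_sum
          intro i _
          have hsq : (1 - d i / lmax) ^ 2 ≤ (1 - lmin / lmax) ^ 2 :=
            sq_le_sq' (hkey i).1 (hkey i).2
          have hvv : (0:ℝ) ≤ v t i * v t i := mul_self_nonneg _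
          calc (1 - d i / lmax) * v t i * ((1 - d i / lmax) * v t i)
              = (1 - d i / lmax) ^ 2 * (v t i * v t i) := by ring
            _ ≤ (1 - lmin / lmax) ^ 2 * (v t i * v t i) := by
                exact mul_le_mul_of_nonneg_right hsq hvv
        calc Real.sqrt (v (t + 1) ⬝ᵥ v (t + 1))
            ≤ Real.sqrt ((1 - lmin / lmax) ^ 2 * (v t ⬝ᵥ v t)) := Real.sqrt_le_sqrt hle
          _ = (1 - lmin / lmax) * Real.sqrt (v t ⬝ᵥ v t) := by
              rw [Real.sqrt_mul (sq_nonneg _), Real.sqrt_sq hc0]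
      calc Real.sqrt (v (t + 1) ⬝ᵥ v (t + 1)) ≤ (1 - lmin / lmax) * Real.sqrt (v t ⬝ᵥ v t) := hstep
        _ ≤ (1 - lmin / lmax) * ((1 - lmin / lmax) ^ t * Real.sqrt (v 0 ⬝ᵥ v 0)) := by
            exact mul_le_mul_of_nonneg_left ih hc0
        _ = (1 - lmin / lmax) ^ (t + 1) * Real.sqrt (v 0 ⬝ᵥ v 0) := by ring
  intro t
  rw [hnorm t, hnorm 0]
  exact hmain t
end

section
/- Key step of the NGD analysis: with J full column rank and H symmetric positive definite, (JᵀJ)^{1/2}(I − ηJ⁺HJ)(JᵀJ)^{-1/2} = I − ηH̃ where H̃ = (JᵀJ)^{-1/2}JᵀHJ(JᵀJ)^{-1/2}; consequently J⁺HJ is similar to the symmetric positive definite matrix H̃ and all eigenvalues of J⁺HJ are real and positive. -/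
open Matrix
open scoped ComplexOrder
open scoped MatrixOrder

/-- Complexification of a real positive definite matrix is positive definite. -/
lemma posDef_map_ofReal {n : ℕ} {S : Matrix (Fin n) (Fin n) ℝ} (hS : S.PosDef) :
    (S.map Complex.ofReal).PosDef := by
  classical
  have hpsd := hS.posSemidef
  set B := CFC.sqrt S with hBdef
  have hBB : B * B = S := CFC.sqrt_mul_sqrt_self S (Matrix.nonneg_iff_posSemidef.mpr hpsd)
  have hBH : Bᴴ = B := (Matrix.nonneg_iff_posSemidef.mp (CFC.sqrt_nonneg S)).1
  have hmap : S.map Complex.ofReal =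
      (B.map Complex.ofReal) * (B.map Complex.ofReal) := by
    rw [← hBB]
    exact Matrix.map_mul (f := Complex.ofRealHom)
  have hsemi : Function.Semiconj Complex.ofReal star star := by
    intro x; simp [Complex.conj_ofReal]
  have hBCH : (B.map Complex.ofReal)ᴴ = B.map Complex.ofReal := by
    rw [← Matrix.conjTranspose_map Complex.ofReal hsemi, hBH]
  have hdet : IsUnit (S.map Complex.ofReal).det := by
    have h0 : (S.map Complex.ofReal).det = (S.det : ℂ) := by
      have := (Complex.ofRealHom.map_det S).symm
      simp only [RingHom.mapMatrix_apply] at this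
      exact this
    rw [h0]
    exact (isUnit_iff_ne_zero).2 (by exact_mod_cast hS.det_pos.ne')
  refine Matrix.PosDef.of_dotProduct_mulVec_pos ?_ ?_
  · exact hS.1.map Complex.ofReal hsemi
  · intro x hx
    have hBx : (B.map Complex.ofReal) *ᵥ x ≠ 0 := by
      intro h0
      have hSx : (S.map Complex.ofReal) *ᵥ x = 0 := by
        rw [hmap, ← Matrix.mulVec_mulVec, h0, Matrix.mulVec_zero]
      have : x = 0 := by
        have := congrArg (fun y => (S.map Complex.ofReal)⁻¹ *ᵥ y) hSx
        simpa [Matrix.mulVec_mulVec, Matrix.nonsing_inv_mul _ hdet] using this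
      exact hx this
    have hc : star x ⬝ᵥ (S.map Complex.ofReal) *ᵥ x
        = star ((B.map Complex.ofReal) *ᵥ x) ⬝ᵥ ((B.map Complex.ofReal) *ᵥ x) := by
      rw [hmap, ← Matrix.mulVec_mulVec, Matrix.dotProduct_mulVec,
        star_mulVec, hBCH]
    rw [hc]
    exact Matrix.dotProduct_star_self_pos_iff.mpr hBx

/-- Key step of the NGD analysis: `(JᵀJ)^{1/2}(I − ηJ⁺HJ)(JᵀJ)^{-1/2} = I − ηH̃`, so
`J⁺HJ` is similar to the symmetric positive definite matrix `H̃` and all its (complex)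
eigenvalues are real and positive. -/
theorem stmt13 {m n : ℕ} (J : Matrix (Fin m) (Fin n) ℝ) (hrank : J.rank = n)
    (H : Matrix (Fin m) (Fin m) ℝ) (hH : H.PosDef) (η : ℝ)
    -- `R` is the symmetric positive definite square root of `JᵀJ`
    (R : Matrix (Fin n) (Fin n) ℝ) (hRpd : R.PosDef) (hRR : R * R = Jᵀ * J)
    (Htil : Matrix (Fin n) (Fin n) ℝ) (hHtil : Htil = R⁻¹ * (Jᵀ * H * J) * R⁻¹) :
    R * ((1 : Matrix (Fin n) (Fin n) ℝ) - η • ((Jᵀ * J)⁻¹ * Jᵀ * H * J)) * R⁻¹ =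
        (1 : Matrix (Fin n) (Fin n) ℝ) - η • Htil ∧
      Htil.PosDef ∧
      ∀ μ : ℂ, (∃ v : Fin n → ℂ, v ≠ 0 ∧
          (((Jᵀ * J)⁻¹ * Jᵀ * H * J).map Complex.ofReal) *ᵥ v = μ • v) →
        μ.im = 0 ∧ 0 < μ.re := by
  classical
  have hRdet : IsUnit R.det := (Matrix.isUnit_iff_isUnit_det R).mp hRpd.isUnit
  have hRinv : R * R⁻¹ = 1 := Matrix.mul_nonsing_inv R hRdet
  have hinvR : R⁻¹ * R = 1 := Matrix.nonsing_inv_mul R hRdet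
  have hRsym : Rᵀ = R := by
    rw [← Matrix.conjTranspose_eq_transpose_of_trivial]; exact hRpd.1.eq
  have hJJ : (Jᵀ * J)⁻¹ = R⁻¹ * R⁻¹ := by rw [← hRR, Matrix.mul_inv_rev]
  -- the similarity computation
  have key : R * ((Jᵀ * J)⁻¹ * Jᵀ * H * J) * R⁻¹ = Htil := by
    rw [hJJ, hHtil]
    simp only [Matrix.mul_assoc]
    rw [← Matrix.mul_assoc R R⁻¹, hRinv, one_mul]
  have hfirst : R * ((1 : Matrix (Fin n) (Fin n) ℝ) - η • ((Jᵀ * J)⁻¹ * Jᵀ * H * J)) * R⁻¹ =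
      (1 : Matrix (Fin n) (Fin n) ℝ) - η • Htil := by
    rw [Matrix.mul_sub, Matrix.sub_mul, Matrix.mul_one, hRinv, mul_smul_comm,
      smul_mul_assoc, key]
  -- injectivity helper: `R *ᵥ y = 0 → y = 0`
  have hRvec : ∀ y : Fin n → ℝ, R *ᵥ y = 0 → y = 0 := by
    intro y hy
    have := congrArg (fun z => R⁻¹ *ᵥ z) hy
    simpa [Matrix.mulVec_mulVec, hinvR] using this
  -- `JᵀHJ` is positive definite
  have hJHJ : (Jᵀ * H * J).PosDef := by
    refine Matrix.PosDef.of_dotProduct_mulVec_pos ?_ ?_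
    · have : (Jᵀ * H * J)ᵀ = Jᵀ * H * J := by
        have hHs : Hᵀ = H := by
          rw [← Matrix.conjTranspose_eq_transpose_of_trivial]; exact hH.1.eq
        rw [Matrix.transpose_mul, Matrix.transpose_mul, Matrix.transpose_transpose, hHs,
          Matrix.mul_assoc]
      show (Jᵀ * H * J)ᴴ = Jᵀ * H * J
      rwa [Matrix.conjTranspose_eq_transpose_of_trivial]
    · intro x hx
      have hJx : J *ᵥ x ≠ 0 := by
        intro h0
        have h1 : (Jᵀ * J) *ᵥ x = 0 := by
          rw [← Matrix.mulVec_mulVec, h0, Matrix.mulVec_zero]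
        rw [← hRR, ← Matrix.mulVec_mulVec] at h1
        exact hx (hRvec _ (hRvec _ h1))
      have : star x ⬝ᵥ (Jᵀ * H * J) *ᵥ x
          = star (J *ᵥ x) ⬝ᵥ H *ᵥ (J *ᵥ x) := by
        have hs : star x ᵥ* Jᵀ = star (J *ᵥ x) := by
          simp [Matrix.vecMul_transpose, star_trivial]
        rw [show (Jᵀ * H * J) *ᵥ x = Jᵀ *ᵥ (H *ᵥ (J *ᵥ x)) by
          simp [Matrix.mulVec_mulVec, Matrix.mul_assoc],
          Matrix.dotProduct_mulVec, hs]
      rw [this]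
      exact hH.dotProduct_mulVec_pos hJx
  -- Htil is positive definite
  have hRinvsym : (R⁻¹)ᵀ = R⁻¹ := by rw [Matrix.transpose_nonsing_inv, hRsym]
  have hHtilpd : Htil.PosDef := by
    refine Matrix.PosDef.of_dotProduct_mulVec_pos ?_ ?_
    · have : Htilᵀ = Htil := by
        rw [hHtil, Matrix.transpose_mul, Matrix.transpose_mul, hRinvsym]
        have hJHJs : (Jᵀ * H * J)ᵀ = Jᵀ * H * J := by
          rw [← Matrix.conjTranspose_eq_transpose_of_trivial]; exact hJHJ.1.eq
        rw [hJHJs]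
        simp [Matrix.mul_assoc]
      show Htilᴴ = Htil
      rwa [Matrix.conjTranspose_eq_transpose_of_trivial]
    · intro x hx
      have hRx : R⁻¹ *ᵥ x ≠ 0 := by
        intro h0
        have := congrArg (fun z => R *ᵥ z) h0
        simp only [Matrix.mulVec_mulVec, hRinv, Matrix.one_mulVec, Matrix.mulVec_zero] at this
        exact hx this
      have hs : star x ᵥ* R⁻¹ = star (R⁻¹ *ᵥ x) := by
        have h1 : x ᵥ* R⁻¹ = R⁻¹ *ᵥ x := by
          conv_lhs => rw [← hRinvsym]
          rw [Matrix.vecMul_transpose]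
        simp [star_trivial, h1]
      have : star x ⬝ᵥ Htil *ᵥ x
          = star (R⁻¹ *ᵥ x) ⬝ᵥ (Jᵀ * H * J) *ᵥ (R⁻¹ *ᵥ x) := by
        rw [hHtil, show (R⁻¹ * (Jᵀ * H * J) * R⁻¹) *ᵥ x
            = R⁻¹ *ᵥ ((Jᵀ * H * J) *ᵥ (R⁻¹ *ᵥ x)) by
          simp [Matrix.mulVec_mulVec, Matrix.mul_assoc],
          Matrix.dotProduct_mulVec, hs]
      rw [this]
      exact hJHJ.dotProduct_mulVec_pos hRx
  refine ⟨hfirst, hHtilpd, ?_⟩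
  -- eigenvalues
  rintro μ ⟨v, hv, heig⟩
  have hRA : R * ((Jᵀ * J)⁻¹ * Jᵀ * H * J) = Htil * R := by
    have := congrArg (fun M => M * R) key
    simpa [Matrix.mul_assoc, hinvR] using this
  set A := (Jᵀ * J)⁻¹ * Jᵀ * H * J with hA
  set Rc := R.map Complex.ofReal with hRc
  set Hc := Htil.map Complex.ofReal with hHc
  have hRAc : Rc * (A.map Complex.ofReal) = Hc * Rc := by
    have h1 : (R * A).map Complex.ofReal = Rc * A.map Complex.ofReal :=
      Matrix.map_mul (f := Complex.ofRealHom)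
    have h2 : (Htil * R).map Complex.ofReal = Hc * Rc :=
      Matrix.map_mul (f := Complex.ofRealHom)
    rw [← h1, ← h2, hRA]
  set w := Rc *ᵥ v with hw
  have hweig : Hc *ᵥ w = μ • w := by
    have := congrArg (fun M => M *ᵥ v) hRAc
    simp only [← Matrix.mulVec_mulVec] at this
    rw [heig] at this
    rw [hw, ← this, Matrix.mulVec_smul]
  have hwne : w ≠ 0 := by
    intro h0
    have hinvc : (R⁻¹.map Complex.ofReal) * Rc = 1 := by
      have h1 : (R⁻¹ * R).map Complex.ofReal = R⁻¹.map Complex.ofReal * Rc :=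
        Matrix.map_mul (f := Complex.ofRealHom)
      rw [← h1, hinvR]
      exact Matrix.map_one _ Complex.ofReal_zero Complex.ofReal_one
    have : v = 0 := by
      have h1 := congrArg (fun z => (R⁻¹.map Complex.ofReal) *ᵥ z) h0
      simp only [hw, Matrix.mulVec_mulVec, hinvc, Matrix.one_mulVec,
        Matrix.mulVec_zero] at h1
      exact h1
    exact hv this
  have hHcpd : Hc.PosDef := posDef_map_ofReal hHtilpd
  have hcpos : 0 < star w ⬝ᵥ Hc *ᵥ w := hHcpd.dotProduct_mulVec_pos hwne
  have hdpos : 0 < star w ⬝ᵥ w := Matrix.dotProduct_star_self_pos_iff.mpr hwne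
  have hmul : star w ⬝ᵥ Hc *ᵥ w = μ * (star w ⬝ᵥ w) := by
    rw [hweig, dotProduct_smul, smul_eq_mul]
  set c := star w ⬝ᵥ Hc *ᵥ w with hc
  set d := star w ⬝ᵥ w with hd
  have hcre : 0 < c.re := (Complex.lt_def.mp hcpos).1
  have hcim : c.im = 0 := ((Complex.lt_def.mp hcpos).2).symm
  have hdre : 0 < d.re := (Complex.lt_def.mp hdpos).1
  have hdim : d.im = 0 := ((Complex.lt_def.mp hdpos).2).symm
  have hre : c.re = μ.re * d.re := by
    rw [hmul, Complex.mul_re, hdim]; ring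
  have him : 0 = μ.im * d.re := by
    have : c.im = μ.re * d.im + μ.im * d.re := by rw [hmul, Complex.mul_im]
    rw [hcim] at this; rw [this, hdim]; ring
  constructor
  · by_contra h
    exact h (by
      have := him
      rcases mul_eq_zero.mp this.symm with h1 | h2
      · exact h1
      · exact absurd h2 hdre.ne')
  · by_contra h
    push_neg at h
    have : μ.re * d.re ≤ 0 := mul_nonpos_of_nonpos_of_nonneg h hdre.le
    rw [← hre] at this
    exact absurd this (not_le.mpr hcre)
end

section
/- One-step contraction of SNGD for LLQ: assume strong consistency, P̄ shares an eigenbasis with JᵀJ, set Q̄ = (JᵀJ)^{-1/2}P̄(JᵀJ)^{-1/2}, γ = 1/λ_max(E[(JᵀJ)^{-1/2}P(S)Q̄⁻¹P(S)(JᵀJ)^{-1/2}]), H̃ = (JᵀJ)^{-1/2}JᵀHJ(JᵀJ)^{-1/2}, α = λ_min(P̄), and step size η = γ/λ_max(H̃). Then for the iteration θ_{t+1} − θ* = (I − ηP(S)J⁺HJ)(θ_t − θ*) with S independent of θ_t, E‖θ_{t+1} − θ*‖²_{Q̄⁻¹} ≤ (1 − κ⁻¹(H̃)·α·γ)·‖θ_t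 − θ*‖²_{Q̄⁻¹}. -/
open Matrix

namespace SNGDaux

variable {n : ℕ}

lemma herm_iff {A : Matrix (Fin n) (Fin n) ℝ} : A.IsHermitian ↔ Aᵀ = A := by
  rw [Matrix.IsHermitian, Matrix.conjTranspose_eq_transpose_of_trivial]

lemma sandwich {S M : Matrix (Fin n) (Fin n) ℝ} (hS : S.IsHermitian) (x : Fin n → ℝ) :
    x ⬝ᵥ ((S * M * S) *ᵥ x) = (S *ᵥ x) ⬝ᵥ (M *ᵥ (S *ᵥ x)) := by
  rw [← Matrix.mulVec_mulVec, ← Matrix.mulVec_mulVec, Matrix.dotProduct_mulVec x S]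
  congr 1
  rw [← Matrix.mulVec_transpose, herm_iff.mp hS]

lemma herm_dot {M : Matrix (Fin n) (Fin n) ℝ} (hM : M.IsHermitian) (x y : Fin n → ℝ) :
    x ⬝ᵥ (M *ᵥ y) = y ⬝ᵥ (M *ᵥ x) := by
  rw [Matrix.dotProduct_mulVec, ← Matrix.mulVec_transpose, herm_iff.mp hM,
    dotProduct_comm]

lemma diag_repr {A : Matrix (Fin n) (Fin n) ℝ} (hA : A.IsHermitian) (x : Fin n → ℝ) :
    ∃ y : Fin n → ℝ, (x ⬝ᵥ x = ∑ i, y i ^ 2) ∧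
      (x ⬝ᵥ (A *ᵥ x) = ∑ i, hA.eigenvalues i * y i ^ 2) ∧
      (x ⬝ᵥ ((A * A) *ᵥ x) = ∑ i, hA.eigenvalues i ^ 2 * y i ^ 2) := by
  set V : Matrix (Fin n) (Fin n) ℝ := (hA.eigenvectorUnitary : Matrix (Fin n) (Fin n) ℝ) with hV
  have hV1 : star V * V = 1 := Matrix.mem_unitaryGroup_iff'.mp hA.eigenvectorUnitary.2
  have hV2 : V * star V = 1 := Matrix.mem_unitaryGroup_iff.mp hA.eigenvectorUnitary.2
  have hstar : star V = Vᵀ := by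
    rw [Matrix.star_eq_conjTranspose, Matrix.conjTranspose_eq_transpose_of_trivial]
  set e := hA.eigenvalues with he
  have hspec : A = V * Matrix.diagonal e * star V := by
    have := hA.spectral_theorem
    simpa [RCLike.ofReal_real_eq_id] using this
  refine ⟨star V *ᵥ x, ?_, ?_, ?_⟩
  · have h1 : (star V *ᵥ x) ⬝ᵥ (star V *ᵥ x) = x ⬝ᵥ x := by
      rw [hstar, Matrix.dotProduct_mulVec (Vᵀ *ᵥ x) Vᵀ, Matrix.vecMul_transpose,
        Matrix.mulVec_mulVec]
      rw [← hstar, hV2, Matrix.one_mulVec]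
    rw [← h1]
    simp [dotProduct, pow_two]
  · have key : ∀ d : Fin n → ℝ, x ⬝ᵥ ((V * Matrix.diagonal d * star V) *ᵥ x)
        = ∑ i, d i * (star V *ᵥ x) i ^ 2 := by
      intro d
      rw [← Matrix.mulVec_mulVec, ← Matrix.mulVec_mulVec, Matrix.dotProduct_mulVec x V]
      have hxV : x ᵥ* V = star V *ᵥ x := by
        rw [hstar, Matrix.mulVec_transpose]
      rw [hxV]
      simp only [dotProduct, Matrix.mulVec_diagonal]
      exact Finset.sum_congr rfl fun i _ => by ring
    rw [hspec] at *
    exact key e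
  · have key : ∀ d : Fin n → ℝ, x ⬝ᵥ ((V * Matrix.diagonal d * star V) *ᵥ x)
        = ∑ i, d i * (star V *ᵥ x) i ^ 2 := by
      intro d
      rw [← Matrix.mulVec_mulVec, ← Matrix.mulVec_mulVec, Matrix.dotProduct_mulVec x V]
      have hxV : x ᵥ* V = star V *ᵥ x := by
        rw [hstar, Matrix.mulVec_transpose]
      rw [hxV]
      simp only [dotProduct, Matrix.mulVec_diagonal]
      exact Finset.sum_congr rfl fun i _ => by ring
    have hAA : A * A = V * Matrix.diagonal (fun i => e i * e i) * star V := by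
      rw [hspec]
      simp only [Matrix.mul_assoc]
      rw [← Matrix.mul_assoc (star V) V, hV1, Matrix.one_mul,
        ← Matrix.mul_assoc (Matrix.diagonal e)]
      rw [Matrix.diagonal_mul_diagonal]
    rw [hAA, key]
    exact Finset.sum_congr rfl fun i _ => by ring

section Bounds
variable (hn : 0 < n) {A : Matrix (Fin n) (Fin n) ℝ} (hA : A.IsHermitian) (x : Fin n → ℝ)

set_option linter.unusedSectionVars false
include hn

lemma quad_le_iSup : x ⬝ᵥ (A *ᵥ x) ≤ (⨆ i, hA.eigenvalues i) * (x ⬝ᵥ x) := by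
  haveI : Nonempty (Fin n) := Fin.pos_iff_nonempty.mp hn
  obtain ⟨y, h1, h2, -⟩ := diag_repr hA x
  rw [h1, h2, Finset.mul_sum]
  refine Finset.sum_le_sum fun i _ => ?_
  exact mul_le_mul_of_nonneg_right (le_ciSup (Set.Finite.bddAbove (Set.finite_range _)) i)
    (sq_nonneg _)

lemma iInf_le_quad : (⨅ i, hA.eigenvalues i) * (x ⬝ᵥ x) ≤ x ⬝ᵥ (A *ᵥ x) := by
  haveI : Nonempty (Fin n) := Fin.pos_iff_nonempty.mp hn
  obtain ⟨y, h1, h2, -⟩ := diag_repr hA x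
  rw [h1, h2, Finset.mul_sum]
  refine Finset.sum_le_sum fun i _ => ?_
  exact mul_le_mul_of_nonneg_right (ciInf_le (Set.Finite.bddBelow (Set.finite_range _)) i)
    (sq_nonneg _)

lemma sq_quad_le (h0 : ∀ i, 0 ≤ hA.eigenvalues i) :
    x ⬝ᵥ ((A * A) *ᵥ x) ≤ (⨆ i, hA.eigenvalues i) * (x ⬝ᵥ (A *ᵥ x)) := by
  haveI : Nonempty (Fin n) := Fin.pos_iff_nonempty.mp hn
  obtain ⟨y, -, h2, h3⟩ := diag_repr hA x
  rw [h2, h3, Finset.mul_sum]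
  refine Finset.sum_le_sum fun i _ => ?_
  have hle : hA.eigenvalues i ≤ ⨆ j, hA.eigenvalues j :=
    le_ciSup (Set.Finite.bddAbove (Set.finite_range _)) i
  nlinarith [mul_le_mul_of_nonneg_right (mul_le_mul_of_nonneg_right hle (h0 i)) (sq_nonneg (y i))]

lemma le_sq_quad (h0 : ∀ i, 0 ≤ hA.eigenvalues i) :
    (⨅ i, hA.eigenvalues i) * (x ⬝ᵥ (A *ᵥ x)) ≤ x ⬝ᵥ ((A * A) *ᵥ x) := by
  haveI : Nonempty (Fin n) := Fin.pos_iff_nonempty.mp hn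
  obtain ⟨y, -, h2, h3⟩ := diag_repr hA x
  rw [h2, h3, Finset.mul_sum]
  refine Finset.sum_le_sum fun i _ => ?_
  have hle : (⨅ j, hA.eigenvalues j) ≤ hA.eigenvalues i :=
    ciInf_le (Set.Finite.bddBelow (Set.finite_range _)) i
  nlinarith [mul_le_mul_of_nonneg_right (mul_le_mul_of_nonneg_right hle (h0 i)) (sq_nonneg (y i))]

end Bounds

lemma commute_of_commute_sq {A C : Matrix (Fin n) (Fin n) ℝ} (hA : A.PosDef)
    (h : C * (A * A) = (A * A) * C) : C * A = A * C := by
  have hAH := hA.isHermitian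
  set V : Matrix (Fin n) (Fin n) ℝ := (hAH.eigenvectorUnitary : Matrix (Fin n) (Fin n) ℝ)
  have hV1 : star V * V = 1 := Matrix.mem_unitaryGroup_iff'.mp hAH.eigenvectorUnitary.2
  have hV2 : V * star V = 1 := Matrix.mem_unitaryGroup_iff.mp hAH.eigenvectorUnitary.2
  set e := hAH.eigenvalues with he
  have hepos : ∀ i, 0 < e i := fun i => hA.eigenvalues_pos i
  have hspec : A = V * Matrix.diagonal e * star V := by
    have := hAH.spectral_theorem
    simpa [RCLike.ofReal_real_eq_id] using this
  set M : Matrix (Fin n) (Fin n) ℝ := star V * C * V with hM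
  have hC : C = V * M * star V := by
    have h9 : V * M * star V = (V * star V) * C * (V * star V) := by
      simp only [hM, Matrix.mul_assoc]
    rw [h9, hV2, Matrix.one_mul, Matrix.mul_one]
  have hAA : A * A = V * Matrix.diagonal (fun i => e i * e i) * star V := by
    rw [hspec]
    simp only [Matrix.mul_assoc]
    rw [← Matrix.mul_assoc (star V) V, hV1, Matrix.one_mul,
      ← Matrix.mul_assoc (Matrix.diagonal e), Matrix.diagonal_mul_diagonal]
  have hMD2 : M * Matrix.diagonal (fun i => e i * e i)
      = Matrix.diagonal (fun i => e i * e i) * M := by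
    have := h
    rw [hC, hAA] at this
    have h2 : V * (M * Matrix.diagonal (fun i => e i * e i)) * star V
        = V * (Matrix.diagonal (fun i => e i * e i) * M) * star V := by
      calc V * (M * Matrix.diagonal (fun i => e i * e i)) * star V
          = (V * M * star V) * (V * Matrix.diagonal (fun i => e i * e i) * star V) := by
            simp only [Matrix.mul_assoc]
            rw [← Matrix.mul_assoc (star V) V, hV1, Matrix.one_mul]
        _ = (V * Matrix.diagonal (fun i => e i * e i) * star V) * (V * M * star V) := this
        _ = V * (Matrix.diagonal (fun i => e i * e i) * M) * star V := by
            simp only [Matrix.mul_assoc]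
            rw [← Matrix.mul_assoc (star V) V, hV1, Matrix.one_mul]
    have h3 := congrArg (fun X => star V * X * V) h2
    simpa only [Matrix.mul_assoc, ← Matrix.mul_assoc (star V) V, hV1, Matrix.one_mul,
      Matrix.mul_one] using h3
  have hMD : M * Matrix.diagonal e = Matrix.diagonal e * M := by
    ext i j
    have h4 : M i j * (e j * e j) = e i * e i * M i j := by
      have h4' := congrFun (congrFun hMD2 i) j
      simpa [Matrix.mul_diagonal, Matrix.diagonal_mul] using h4'
    simp only [Matrix.mul_diagonal, Matrix.diagonal_mul]
    rcases eq_or_ne (M i j) 0 with h0 | h0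
    · simp [h0]
    · have h5 : e j * e j = e i * e i := by
        have h6 : (e j * e j - e i * e i) * M i j = 0 := by linear_combination h4
        rcases mul_eq_zero.mp h6 with h7 | h7
        · linarith
        · exact absurd h7 h0
      have h8 : e j = e i := (mul_self_inj (hepos j).le (hepos i).le).mp h5
      rw [h8]; ring
  calc C * A = (V * M * star V) * (V * Matrix.diagonal e * star V) := by rw [← hC, ← hspec]
    _ = V * (M * Matrix.diagonal e) * star V := by
        simp only [Matrix.mul_assoc]
        rw [← Matrix.mul_assoc (star V) V, hV1, Matrix.one_mul]
    _ = V * (Matrix.diagonal e * M) * star V := by rw [hMD]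
    _ = (V * Matrix.diagonal e * star V) * (V * M * star V) := by
        simp only [Matrix.mul_assoc]
        rw [← Matrix.mul_assoc (star V) V, hV1, Matrix.one_mul]
    _ = A * C := by rw [← hC, ← hspec]

lemma posDef_conj {A B : Matrix (Fin n) (Fin n) ℝ} (hA : A.PosDef) (hB : B.IsHermitian)
    (hBu : IsUnit B) : (B * A * B).PosDef := by
  refine Matrix.PosDef.of_dotProduct_mulVec_pos ?_ ?_
  · have h1 : (Bᴴ * A * B).IsHermitian := Matrix.isHermitian_conjTranspose_mul_mul B hA.isHermitian
    rwa [hB.eq] at h1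
  · intro x hx
    rw [star_trivial, sandwich hB x]
    have hBx : B *ᵥ x ≠ 0 := by
      intro h0
      exact hx (Matrix.mulVec_injective_iff_isUnit.mpr hBu (h0.trans (Matrix.mulVec_zero B).symm))
    have := hA.dotProduct_mulVec_pos hBx
    rwa [star_trivial] at this

lemma sum_mulVec' {Ω : Type*} [Fintype Ω] (F : Ω → Matrix (Fin n) (Fin n) ℝ) (v : Fin n → ℝ) :
    (∑ s, F s) *ᵥ v = ∑ s, F s *ᵥ v := by
  ext j
  simp only [Matrix.mulVec, dotProduct, Matrix.sum_apply, Finset.sum_apply, Finset.sum_mul]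
  rw [Finset.sum_comm]

lemma dot_sum' {Ω : Type*} [Fintype Ω] (x : Fin n → ℝ) (f : Ω → Fin n → ℝ) :
    x ⬝ᵥ (∑ s, f s) = ∑ s, x ⬝ᵥ f s := by
  simp only [dotProduct, Finset.sum_apply, Finset.mul_sum]
  rw [Finset.sum_comm]

lemma quad_expand {Qi : Matrix (Fin n) (Fin n) ℝ} (hQi : Qi.IsHermitian) (x u : Fin n → ℝ)
    (η : ℝ) :
    (x - η • u) ⬝ᵥ (Qi *ᵥ (x - η • u)) =
      x ⬝ᵥ (Qi *ᵥ x) - 2 * η * (x ⬝ᵥ (Qi *ᵥ u)) + η ^ 2 * (u ⬝ᵥ (Qi *ᵥ u)) := by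
  rw [Matrix.mulVec_sub, Matrix.mulVec_smul]
  rw [sub_dotProduct, dotProduct_sub, dotProduct_sub]
  rw [smul_dotProduct, smul_dotProduct, dotProduct_smul,
    dotProduct_smul]
  rw [herm_dot hQi u x]
  simp only [smul_eq_mul]
  ring

end SNGDaux

/-- One-step contraction of SNGD for linear least-quadratics: under strong consistency and
assuming `P̄` shares an eigenbasis with `JᵀJ`, with `Q̄ = (JᵀJ)^{-1/2}P̄(JᵀJ)^{-1/2}`,
`γ = 1/λ_max(E[(JᵀJ)^{-1/2}P(S)Q̄⁻¹P(S)(JᵀJ)^{-1/2}])`,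
`H̃ = (JᵀJ)^{-1/2}JᵀHJ(JᵀJ)^{-1/2}`, `α = λ_min(P̄)`, and step size `η = γ/λ_max(H̃)`,
the iteration `θ_{t+1} − θ* = (I − ηP(S)J⁺HJ)(θ_t − θ*)` contracts in expectation in the
`Q̄⁻¹`-norm with factor `1 − κ⁻¹(H̃)·α·γ`. -/
theorem stmt16 {m n : ℕ} (hn : 0 < n) {Ω : Type*} [Fintype Ω]
    (w : Ω → ℝ) (hw : ∀ s, 0 ≤ w s) (hw1 : ∑ s, w s = 1)
    (J : Matrix (Fin m) (Fin n) ℝ) (hrank : J.rank = n)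
    (H : Matrix (Fin m) (Fin m) ℝ) (hH : H.PosDef)
    (q : Fin m → ℝ) (θs : Fin n → ℝ) (hθs : (H * J) *ᵥ θs + q = 0)
    (hrange : ∀ v : Fin n → ℝ, ∃ u : Fin n → ℝ, (H * J) *ᵥ v = J *ᵥ u)
    (P : Ω → Matrix (Fin n) (Fin n) ℝ)
    (hsym : ∀ s, (P s).IsHermitian)
    (hpos : ∀ s, (P s).PosSemidef)
    (hle : ∀ s, ((1 : Matrix (Fin n) (Fin n) ℝ) - P s).PosSemidef)
    (Pbar : Matrix (Fin n) (Fin n) ℝ) (hPbar : Pbar = ∑ s, w s • P s)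
    (hPbarPD : Pbar.PosDef) (hcomm : Commute Pbar (Jᵀ * J))
    -- `Rinv` is the inverse of the symmetric positive definite square root of `JᵀJ`
    (Rinv : Matrix (Fin n) (Fin n) ℝ) (hRpd : Rinv.PosDef) (hRinv : Rinv * Rinv = (Jᵀ * J)⁻¹)
    (Qbar : Matrix (Fin n) (Fin n) ℝ) (hQbar : Qbar = Rinv * Pbar * Rinv)
    (G : Matrix (Fin n) (Fin n) ℝ)
    (hG : G = ∑ s, w s • (Rinv * P s * Qbar⁻¹ * P s * Rinv))
    (hGH : G.IsHermitian)
    (γ : ℝ) (hγ : γ = 1 / (⨆ i, hGH.eigenvalues i))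
    (Htil : Matrix (Fin n) (Fin n) ℝ) (hHtil : Htil = Rinv * (Jᵀ * H * J) * Rinv)
    (hHtH : Htil.IsHermitian)
    (lmaxH lminH : ℝ) (hlmaxH : lmaxH = ⨆ i, hHtH.eigenvalues i)
    (hlminH : lminH = ⨅ i, hHtH.eigenvalues i)
    (hPbarH : Pbar.IsHermitian) (α : ℝ) (hα : α = ⨅ i, hPbarH.eigenvalues i)
    (η : ℝ) (hη : η = γ / lmaxH)
    (θt : Fin n → ℝ) (θnext : Ω → Fin n → ℝ)
    (hupd : ∀ s, θnext s - θs =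
      ((1 : Matrix (Fin n) (Fin n) ℝ) - η • (P s * ((Jᵀ * J)⁻¹ * Jᵀ * H * J))) *ᵥ
        (θt - θs)) :
    ∑ s, w s * ((θnext s - θs) ⬝ᵥ (Qbar⁻¹ *ᵥ (θnext s - θs))) ≤
      (1 - (lminH / lmaxH) * α * γ) * ((θt - θs) ⬝ᵥ (Qbar⁻¹ *ᵥ (θt - θs))) := by
  classical
  haveI : Nonempty (Fin n) := Fin.pos_iff_nonempty.mp hn
  open SNGDaux in
  set B := Jᵀ * J with hB
  set A0 := B⁻¹ * Jᵀ * H * J with hA0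
  set x := θt - θs with hx
  -- invertibility facts
  have hRu : IsUnit Rinv := hRpd.isUnit
  have hRdet : IsUnit Rinv.det := (Matrix.isUnit_iff_isUnit_det _).mp hRu
  have hRiRinv : Rinv⁻¹ * Rinv = 1 := Matrix.nonsing_inv_mul _ hRdet
  have hRinvRi : Rinv * Rinv⁻¹ = 1 := Matrix.mul_nonsing_inv _ hRdet
  have hBu : IsUnit B := by
    rw [← Matrix.isUnit_nonsing_inv_iff, ← hRinv]
    exact hRu.mul hRu
  have hBdet : IsUnit B.det := (Matrix.isUnit_iff_isUnit_det _).mp hBu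
  have hBiB : B⁻¹ * B = 1 := Matrix.nonsing_inv_mul _ hBdet
  have hBBi : B * B⁻¹ = 1 := Matrix.mul_nonsing_inv _ hBdet
  have hJinj : ∀ v : Fin n → ℝ, J *ᵥ v = 0 → v = 0 := by
    intro v hv
    have h1 : B *ᵥ v = 0 := by
      rw [hB, ← Matrix.mulVec_mulVec, hv, Matrix.mulVec_zero]
    exact Matrix.mulVec_injective_iff_isUnit.mpr hBu
      (h1.trans (Matrix.mulVec_zero B).symm)
  -- positive definiteness
  have hKH : (Jᵀ * H * J).IsHermitian := by
    have h1 : (Jᴴ * H * J).IsHermitian :=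
      Matrix.isHermitian_conjTranspose_mul_mul J hH.isHermitian
    rwa [Matrix.conjTranspose_eq_transpose_of_trivial] at h1
  have hK : (Jᵀ * H * J).PosDef := by
    refine Matrix.PosDef.of_dotProduct_mulVec_pos hKH fun v hv => ?_
    rw [star_trivial]
    have e1 : (Jᵀ * H * J) *ᵥ v = Jᵀ *ᵥ (H *ᵥ (J *ᵥ v)) := by
      rw [← Matrix.mulVec_mulVec, ← Matrix.mulVec_mulVec]
    rw [e1, Matrix.dotProduct_mulVec, Matrix.vecMul_transpose]
    have hJv : J *ᵥ v ≠ 0 := fun h0 => hv (hJinj v h0)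
    have := hH.dotProduct_mulVec_pos hJv
    rwa [star_trivial] at this
  have hHtilPD : Htil.PosDef := by
    rw [hHtil]
    exact SNGDaux.posDef_conj hK hRpd.isHermitian hRu
  have hHtilPSD : Htil.PosSemidef := hHtilPD.posSemidef
  have hQPD : Qbar.PosDef := by
    rw [hQbar]
    exact SNGDaux.posDef_conj hPbarPD hRpd.isHermitian hRu
  have hQdet : IsUnit Qbar.det := (Matrix.isUnit_iff_isUnit_det _).mp hQPD.isUnit
  have hQiQ : Qbar⁻¹ * Qbar = 1 := Matrix.nonsing_inv_mul _ hQdet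
  have hQiPD : Qbar⁻¹.PosDef := hQPD.inv
  have hPdet : IsUnit Pbar.det := (Matrix.isUnit_iff_isUnit_det _).mp hPbarPD.isUnit
  have hPPi : Pbar * Pbar⁻¹ = 1 := Matrix.mul_nonsing_inv _ hPdet
  have hRiH : Rinv⁻¹.IsHermitian := hRpd.isHermitian.inv
  -- commutation
  have hcomm' : Pbar * B = B * Pbar := hcomm
  have hcommi : Pbar * B⁻¹ = B⁻¹ * Pbar := by
    calc Pbar * B⁻¹ = 1 * Pbar * B⁻¹ := by rw [Matrix.one_mul]
      _ = B⁻¹ * B * Pbar * B⁻¹ := by rw [hBiB]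
      _ = B⁻¹ * (B * Pbar) * B⁻¹ := by simp only [Matrix.mul_assoc]
      _ = B⁻¹ * (Pbar * B) * B⁻¹ := by rw [hcomm']
      _ = B⁻¹ * Pbar * (B * B⁻¹) := by simp only [Matrix.mul_assoc]
      _ = B⁻¹ * Pbar := by rw [hBBi, Matrix.mul_one]
  have hcommR : Pbar * Rinv = Rinv * Pbar := by
    refine SNGDaux.commute_of_commute_sq hRpd ?_
    rw [hRinv]
    exact hcommi
  have hQB : Qbar * B = Pbar := by
    rw [hQbar]
    calc Rinv * Pbar * Rinv * B = Rinv * (Pbar * Rinv) * B := by simp only [Matrix.mul_assoc]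
      _ = Rinv * (Rinv * Pbar) * B := by rw [hcommR]
      _ = Rinv * Rinv * (Pbar * B) := by simp only [Matrix.mul_assoc]
      _ = B⁻¹ * (B * Pbar) := by rw [hRinv, hcomm']
      _ = Pbar := by rw [← Matrix.mul_assoc, hBiB, Matrix.one_mul]
  have hQinvP : Qbar⁻¹ * Pbar = B := by
    rw [← hQB, ← Matrix.mul_assoc, hQiQ, Matrix.one_mul]
  have hBA : B * A0 = Jᵀ * H * J := by
    rw [hA0]
    simp only [← Matrix.mul_assoc]
    rw [hBBi, Matrix.one_mul]
  have hkey : Rinv⁻¹ * A0 = Htil * Rinv⁻¹ := by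
    rw [hA0, hHtil, ← hRinv]
    simp only [← Matrix.mul_assoc]
    rw [hRiRinv, Matrix.one_mul, Matrix.mul_assoc _ Rinv Rinv⁻¹, hRinvRi, Matrix.mul_one]
  have hKrep : Rinv⁻¹ * Htil * Rinv⁻¹ = Jᵀ * H * J := by
    rw [hHtil]
    simp only [← Matrix.mul_assoc]
    rw [hRiRinv, Matrix.one_mul, Matrix.mul_assoc _ Rinv Rinv⁻¹, hRinvRi, Matrix.mul_one]
  have hQirep : Qbar⁻¹ = Rinv⁻¹ * Pbar⁻¹ * Rinv⁻¹ := by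
    rw [hQbar, Matrix.mul_inv_rev, Matrix.mul_inv_rev, ← Matrix.mul_assoc]
  have hGrep : Rinv⁻¹ * G * Rinv⁻¹ = ∑ s, w s • (P s * Qbar⁻¹ * P s) := by
    rw [hG, Finset.mul_sum, Finset.sum_mul]
    refine Finset.sum_congr rfl fun s _ => ?_
    rw [Matrix.mul_smul, Matrix.smul_mul]
    congr 1
    simp only [← Matrix.mul_assoc]
    rw [hRiRinv, Matrix.one_mul, Matrix.mul_assoc _ Rinv Rinv⁻¹, hRinvRi, Matrix.mul_one]
  -- vectors
  set z := Rinv⁻¹ *ᵥ x with hz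
  set v := A0 *ᵥ x with hv
  have hvG : Rinv⁻¹ *ᵥ v = Htil *ᵥ z := by
    rw [hv, hz, Matrix.mulVec_mulVec, Matrix.mulVec_mulVec, hkey]
  set c := z ⬝ᵥ (Htil *ᵥ z) with hc
  set base := x ⬝ᵥ (Qbar⁻¹ *ᵥ x) with hbase
  have hbase2 : base = z ⬝ᵥ (Pbar⁻¹ *ᵥ z) := by
    rw [hbase, hQirep, SNGDaux.sandwich hRiH x]
  -- per-sample expansion
  have hsplit : ∀ s, (θnext s - θs) ⬝ᵥ (Qbar⁻¹ *ᵥ (θnext s - θs))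
      = base - 2 * η * (x ⬝ᵥ (Qbar⁻¹ *ᵥ (P s *ᵥ v)))
        + η ^ 2 * (v ⬝ᵥ ((P s * Qbar⁻¹ * P s) *ᵥ v)) := by
    intro s
    have h1 : θnext s - θs = x - η • (P s *ᵥ v) := by
      rw [hupd s, Matrix.sub_mulVec, Matrix.one_mulVec, Matrix.smul_mulVec,
        ← Matrix.mulVec_mulVec]
    rw [h1, SNGDaux.quad_expand hQiPD.isHermitian, ← SNGDaux.sandwich (hsym s) v]
  -- the cross term
  have hcross : ∑ s, w s * (x ⬝ᵥ (Qbar⁻¹ *ᵥ (P s *ᵥ v))) = c := by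
    have e1 : ∀ s, w s * (x ⬝ᵥ (Qbar⁻¹ *ᵥ (P s *ᵥ v)))
        = x ⬝ᵥ ((w s • (Qbar⁻¹ * P s)) *ᵥ v) := by
      intro s
      rw [Matrix.smul_mulVec, dotProduct_smul, smul_eq_mul, Matrix.mulVec_mulVec]
    simp only [e1]
    rw [← SNGDaux.dot_sum', ← SNGDaux.sum_mulVec']
    have e2 : ∑ s, w s • (Qbar⁻¹ * P s) = Qbar⁻¹ * Pbar := by
      rw [hPbar, Finset.mul_sum]
      exact Finset.sum_congr rfl fun s _ => (Matrix.mul_smul _ _ _).symm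
    rw [e2, hQinvP, hv, Matrix.mulVec_mulVec, hBA, ← hKrep, SNGDaux.sandwich hRiH x]
  -- the quadratic term
  have hquad : ∑ s, w s * (v ⬝ᵥ ((P s * Qbar⁻¹ * P s) *ᵥ v))
      = (Htil *ᵥ z) ⬝ᵥ (G *ᵥ (Htil *ᵥ z)) := by
    have e1 : ∀ s, w s * (v ⬝ᵥ ((P s * Qbar⁻¹ * P s) *ᵥ v))
        = v ⬝ᵥ ((w s • (P s * Qbar⁻¹ * P s)) *ᵥ v) := by
      intro s
      rw [Matrix.smul_mulVec, dotProduct_smul, smul_eq_mul]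
    simp only [e1]
    rw [← SNGDaux.dot_sum', ← SNGDaux.sum_mulVec', ← hGrep, SNGDaux.sandwich hRiH v, hvG]
  -- total expansion
  have hLHS : ∑ s, w s * ((θnext s - θs) ⬝ᵥ (Qbar⁻¹ *ᵥ (θnext s - θs)))
      = base - 2 * η * c + η ^ 2 * ((Htil *ᵥ z) ⬝ᵥ (G *ᵥ (Htil *ᵥ z))) := by
    have e1 : ∀ s ∈ Finset.univ, w s * ((θnext s - θs) ⬝ᵥ (Qbar⁻¹ *ᵥ (θnext s - θs)))
        = w s * base - 2 * η * (w s * (x ⬝ᵥ (Qbar⁻¹ *ᵥ (P s *ᵥ v))))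
          + η ^ 2 * (w s * (v ⬝ᵥ ((P s * Qbar⁻¹ * P s) *ᵥ v))) := by
      intro s _
      rw [hsplit s]; ring
    rw [Finset.sum_congr rfl e1, Finset.sum_add_distrib, Finset.sum_sub_distrib,
      ← Finset.sum_mul, hw1, one_mul]
    rw [← Finset.mul_sum, ← Finset.mul_sum, hcross, hquad]
  rw [hLHS]
  -- scalar bounds
  set lamG := ⨆ i, hGH.eigenvalues i with hlamG
  have hGPD : G.PosDef := by
    refine Matrix.PosDef.of_dotProduct_mulVec_pos hGH fun x0 hx0 => ?_
    rw [star_trivial]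
    set r := Rinv *ᵥ x0 with hr
    have hx0' : x0 ⬝ᵥ (G *ᵥ x0)
        = ∑ s, w s * ((P s *ᵥ r) ⬝ᵥ (Qbar⁻¹ *ᵥ (P s *ᵥ r))) := by
      rw [hG, SNGDaux.sum_mulVec', SNGDaux.dot_sum']
      refine Finset.sum_congr rfl fun s _ => ?_
      rw [Matrix.smul_mulVec, dotProduct_smul, smul_eq_mul]
      congr 1
      have hassoc : Rinv * P s * Qbar⁻¹ * P s * Rinv
          = Rinv * (P s * Qbar⁻¹ * P s) * Rinv := by simp only [Matrix.mul_assoc]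
      rw [hassoc, SNGDaux.sandwich hRpd.isHermitian, SNGDaux.sandwich (hsym s)]
    have hrne : r ≠ 0 := fun h0 => hx0 (Matrix.mulVec_injective_iff_isUnit.mpr hRu
      (h0.trans (Matrix.mulVec_zero Rinv).symm))
    rw [hx0']
    have hnn : ∀ s ∈ Finset.univ, 0 ≤ w s * ((P s *ᵥ r) ⬝ᵥ (Qbar⁻¹ *ᵥ (P s *ᵥ r))) := by
      intro s _
      refine mul_nonneg (hw s) ?_
      have := hQiPD.posSemidef.dotProduct_mulVec_nonneg (P s *ᵥ r)
      rwa [star_trivial] at this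
    refine Finset.sum_pos' hnn ?_
    by_contra hcon
    push_neg at hcon
    have hall : ∀ s : Ω, w s • (P s *ᵥ r) = 0 := by
      intro s
      rcases eq_or_ne (w s) 0 with h0 | h0
      · rw [h0, zero_smul]
      · have hw0 : 0 < w s := (hw s).lt_of_ne' h0
        have hle1 := hcon s (Finset.mem_univ s)
        have hge1 := hnn s (Finset.mem_univ s)
        have heq : w s * ((P s *ᵥ r) ⬝ᵥ (Qbar⁻¹ *ᵥ (P s *ᵥ r))) = 0 := le_antisymm hle1 hge1
        have hterm0 : (P s *ᵥ r) ⬝ᵥ (Qbar⁻¹ *ᵥ (P s *ᵥ r)) = 0 :=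
          (mul_eq_zero.mp heq).resolve_left h0
        have hPsr : P s *ᵥ r = 0 := by
          by_contra hne
          have := hQiPD.dotProduct_mulVec_pos hne
          rw [star_trivial] at this
          rw [hterm0] at this
          exact lt_irrefl 0 this
        rw [hPsr, smul_zero]
    have hPr : Pbar *ᵥ r = 0 := by
      rw [hPbar, SNGDaux.sum_mulVec']
      refine Finset.sum_eq_zero fun s _ => ?_
      rw [Matrix.smul_mulVec]
      exact hall s
    have := hPbarPD.dotProduct_mulVec_pos hrne
    rw [star_trivial, hPr, dotProduct_zero] at this
    exact lt_irrefl 0 this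
  have hlamG_pos : 0 < lamG := by
    obtain ⟨i, hi⟩ := exists_eq_ciSup_of_finite (f := hGH.eigenvalues)
    rw [hlamG, ← hi]
    exact hGPD.eigenvalues_pos i
  have hlmax_pos : 0 < lmaxH := by
    obtain ⟨i, hi⟩ := exists_eq_ciSup_of_finite (f := hHtH.eigenvalues)
    rw [hlmaxH, ← hi]
    exact hHtilPD.eigenvalues_pos i
  have hlmin_pos : 0 < lminH := by
    obtain ⟨i, hi⟩ := exists_eq_ciInf_of_finite (f := hHtH.eigenvalues)
    rw [hlminH, ← hi]
    exact hHtilPD.eigenvalues_pos i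
  have hγpos : 0 < γ := by
    rw [hγ]
    exact one_div_pos.mpr hlamG_pos
  have hcnn : 0 ≤ c := by
    have := hHtilPSD.dotProduct_mulVec_nonneg z
    rwa [star_trivial] at this
  set g := (Htil *ᵥ z) ⬝ᵥ (G *ᵥ (Htil *ᵥ z)) with hg
  have bound1 : g ≤ lamG * ((Htil *ᵥ z) ⬝ᵥ (Htil *ᵥ z)) :=
    SNGDaux.quad_le_iSup hn hGH (Htil *ᵥ z)
  have bound2 : (Htil *ᵥ z) ⬝ᵥ (Htil *ᵥ z) ≤ lmaxH * c := by
    have h1 : (Htil *ᵥ z) ⬝ᵥ (Htil *ᵥ z) = z ⬝ᵥ ((Htil * Htil) *ᵥ z) := by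
      have h2 := SNGDaux.sandwich (M := 1) hHtH z
      rw [Matrix.mul_one, Matrix.one_mulVec] at h2
      exact h2.symm
    rw [h1, hlmaxH, hc]
    exact SNGDaux.sq_quad_le hn hHtH z (fun i => hHtilPSD.eigenvalues_nonneg i)
  have bound3 : lminH * (z ⬝ᵥ z) ≤ c := by
    rw [hlminH, hc]
    exact SNGDaux.iInf_le_quad hn hHtH z
  have bound4 : α * base ≤ z ⬝ᵥ z := by
    set u0 := Pbar⁻¹ *ᵥ z with hu0
    have hPu : Pbar *ᵥ u0 = z := by
      rw [hu0, Matrix.mulVec_mulVec, hPPi, Matrix.one_mulVec]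
    have h1 : z ⬝ᵥ z = u0 ⬝ᵥ ((Pbar * Pbar) *ᵥ u0) := by
      have h2 := SNGDaux.sandwich (M := 1) hPbarH u0
      rw [Matrix.mul_one, Matrix.one_mulVec, hPu] at h2
      exact h2.symm
    have h2 : base = u0 ⬝ᵥ (Pbar *ᵥ u0) := by
      rw [hbase2, hPu, dotProduct_comm]
    rw [h1, h2, hα]
    exact SNGDaux.le_sq_quad hn hPbarH u0 (fun i => hPbarPD.posSemidef.eigenvalues_nonneg i)
  -- final chain
  have s1 : η ^ 2 * g ≤ η ^ 2 * (lamG * (lmaxH * c)) := by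
    refine mul_le_mul_of_nonneg_left ?_ (sq_nonneg η)
    calc g ≤ lamG * ((Htil *ᵥ z) ⬝ᵥ (Htil *ᵥ z)) := bound1
      _ ≤ lamG * (lmaxH * c) := mul_le_mul_of_nonneg_left bound2 hlamG_pos.le
  have hgl : γ * lamG = 1 := by
    rw [hγ]
    field_simp
  calc base - 2 * η * c + η ^ 2 * g
      ≤ base - 2 * η * c + η ^ 2 * (lamG * (lmaxH * c)) := by linarith
    _ = base - (γ / lmaxH) * c := by
        rw [hη, hγ]
        field_simp
        ring
    _ ≤ base - (γ / lmaxH) * (lminH * (z ⬝ᵥ z)) := by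
        have h5 : (γ / lmaxH) * (lminH * (z ⬝ᵥ z)) ≤ (γ / lmaxH) * c :=
          mul_le_mul_of_nonneg_left bound3 (div_nonneg hγpos.le hlmax_pos.le)
        linarith
    _ ≤ base - (γ / lmaxH) * (lminH * (α * base)) := by
        have h5 : lminH * (α * base) ≤ lminH * (z ⬝ᵥ z) :=
          mul_le_mul_of_nonneg_left bound4 hlmin_pos.le
        have h6 := mul_le_mul_of_nonneg_left h5 (div_nonneg hγpos.le hlmax_pos.le)
        linarith
    _ = (1 - lminH / lmaxH * α * γ) * base := by
        field_simp
end

section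
/- Ordering of expected projector diagonals: let D = diag(d₁,...,dₙ) with d₁ ≥ ... ≥ dₙ ≥ 0, let Z ∈ ℝ^{k×n} be a standard Gaussian matrix, and let P̄ = E[(ZD)⁺(ZD)]. Then P̄ is diagonal with entries p₁,...,pₙ satisfying p₁ ≥ p₂ ≥ ... ≥ pₙ, where pᵢ = dᵢ²·E[zᵢᵀ(ZD²Zᵀ)⁺zᵢ] and zᵢ is the i-th column of Z. -/
set_option linter.unusedSectionVars false

open Matrix

variable {m p : Type*} [Fintype m] [Fintype p] [DecidableEq m] [DecidableEq p]

/-- Uniqueness of the Moore-Penrose pseudoinverse. -/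
theorem penrose_unique (A : Matrix m p ℝ) (B C : Matrix p m ℝ)
    (hB1 : A * B * A = A) (hB2 : B * A * B = B) (hB3 : (A * B)ᵀ = A * B)
    (hB4 : (B * A)ᵀ = B * A)
    (hC1 : A * C * A = A) (hC2 : C * A * C = C) (hC3 : (A * C)ᵀ = A * C)
    (hC4 : (C * A)ᵀ = C * A) : B = C := by
  have hBAC : B * A = C * A := by
    calc B * A = (B * A)ᵀ := hB4.symm
    _ = Aᵀ * Bᵀ := by rw [transpose_mul]
    _ = (A * (C * A))ᵀ * Bᵀ := by rw [← Matrix.mul_assoc, hC1]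
    _ = (C * A)ᵀ * Aᵀ * Bᵀ := by rw [transpose_mul]
    _ = C * A * (Aᵀ * Bᵀ) := by rw [hC4, Matrix.mul_assoc]
    _ = C * A * (B * A)ᵀ := by rw [transpose_mul]
    _ = C * A * (B * A) := by rw [hB4]
    _ = C * (A * B * A) := by simp only [Matrix.mul_assoc]
    _ = C * A := by rw [hB1]
  have hACB : A * B = A * C := by
    calc A * B = (A * B)ᵀ := hB3.symm
    _ = Bᵀ * Aᵀ := by rw [transpose_mul]
    _ = Bᵀ * (A * C * A)ᵀ := by rw [hC1]
    _ = Bᵀ * (Aᵀ * (A * C)ᵀ) := by rw [transpose_mul]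
    _ = Bᵀ * Aᵀ * (A * C) := by rw [hC3, ← Matrix.mul_assoc]
    _ = (A * B)ᵀ * (A * C) := by rw [transpose_mul]
    _ = A * B * (A * C) := by rw [hB3]
    _ = A * B * A * C := by simp only [Matrix.mul_assoc]
    _ = A * C := by rw [hB1]
  calc B = B * A * B := hB2.symm
  _ = B * (A * B) := by rw [Matrix.mul_assoc]
  _ = B * (A * C) := by rw [hACB]
  _ = B * A * C := by rw [Matrix.mul_assoc]
  _ = C * A * C := by rw [hBAC]
  _ = C := hC2





lemma dot_self_nonneg {n : ℕ} (v : Fin n → ℝ) : 0 ≤ v ⬝ᵥ v :=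
  Finset.sum_nonneg fun i _ => mul_self_nonneg (v i)

lemma proj_entry_eq {n : ℕ} (P : Matrix (Fin n) (Fin n) ℝ) (hs : Pᵀ = P) (hi : P * P = P) (i : Fin n) :
    P i i = ∑ r, (P r i) ^ 2 := by
  have h := congrFun (congrFun hi i) i
  rw [← h]
  simp only [Matrix.mul_apply]
  refine Finset.sum_congr rfl fun r _ => ?_
  have : P i r = P r i := congrFun (congrFun hs r) i
  rw [this, sq]

lemma proj_diag_nonneg {n : ℕ} (P : Matrix (Fin n) (Fin n) ℝ) (hs : Pᵀ = P) (hi : P * P = P)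
    (i : Fin n) : 0 ≤ P i i := by
  rw [proj_entry_eq P hs hi i]
  exact Finset.sum_nonneg fun r _ => sq_nonneg _

lemma proj_diag_le_one {n : ℕ} (P : Matrix (Fin n) (Fin n) ℝ) (hs : Pᵀ = P) (hi : P * P = P)
    (i : Fin n) : P i i ≤ 1 := by
  have hQs : (1 - P)ᵀ = 1 - P := by rw [transpose_sub, transpose_one, hs]
  have hQi : (1 - P) * (1 - P) = 1 - P := by
    simp [Matrix.mul_sub, Matrix.sub_mul, hi]
  have h := proj_diag_nonneg (1 - P) hQs hQi i
  have : (1 - P) i i = 1 - P i i := by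
    simp [Matrix.sub_apply, Matrix.one_apply_eq]
  linarith [this ▸ h]

/-- `Pe` is the closest point: for `v` fixed by `P`,
`(e-v)⬝(e-v) ≥ e⬝e - e⬝Pe`. -/
lemma proj_dist_ge {n : ℕ} (P : Matrix (Fin n) (Fin n) ℝ) (hs : Pᵀ = P) (hi : P * P = P)
    (e v : Fin n → ℝ) (hv : P *ᵥ v = v) :
    e ⬝ᵥ e - e ⬝ᵥ (P *ᵥ e) ≤ (e - v) ⬝ᵥ (e - v) := by
  have hPdot : ∀ a b : Fin n → ℝ, a ⬝ᵥ (P *ᵥ b) = (P *ᵥ a) ⬝ᵥ b := by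
    intro a b
    rw [Matrix.dotProduct_mulVec, ← Matrix.mulVec_transpose, hs, dotProduct_comm]
  have hPP : ∀ a : Fin n → ℝ, P *ᵥ (P *ᵥ a) = P *ᵥ a := by
    intro a; rw [Matrix.mulVec_mulVec, hi]
  have key : (e - v) ⬝ᵥ (e - v) = (e ⬝ᵥ e - e ⬝ᵥ (P *ᵥ e)) +
      (P *ᵥ e - v) ⬝ᵥ (P *ᵥ e - v) := by
    have h1 : (P *ᵥ e) ⬝ᵥ (P *ᵥ e) = e ⬝ᵥ (P *ᵥ e) := by
      rw [← hPdot, hPP]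
    have h2 : e ⬝ᵥ v = (P *ᵥ e) ⬝ᵥ v := by
      rw [← hv, hPdot e v, hv]
    have h3 : v ⬝ᵥ e = e ⬝ᵥ v := dotProduct_comm _ _
    have h4 : v ⬝ᵥ (P *ᵥ e) = (P *ᵥ e) ⬝ᵥ v := dotProduct_comm _ _
    simp only [sub_dotProduct, dotProduct_sub]
    rw [h1, h3, h4, ← h2]
    ring
  rw [key]
  have := dot_self_nonneg (P *ᵥ e - v)
  linarith

lemma proj_dist_eq {n : ℕ} (P : Matrix (Fin n) (Fin n) ℝ) (hs : Pᵀ = P) (hi : P * P = P)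
    (e : Fin n → ℝ) :
    (e - P *ᵥ e) ⬝ᵥ (e - P *ᵥ e) = e ⬝ᵥ e - e ⬝ᵥ (P *ᵥ e) := by
  have hPdot : ∀ a b : Fin n → ℝ, a ⬝ᵥ (P *ᵥ b) = (P *ᵥ a) ⬝ᵥ b := by
    intro a b
    rw [Matrix.dotProduct_mulVec, ← Matrix.mulVec_transpose, hs, dotProduct_comm]
  have h1 : (P *ᵥ e) ⬝ᵥ (P *ᵥ e) = e ⬝ᵥ (P *ᵥ e) := by
    rw [← hPdot, Matrix.mulVec_mulVec, hi]
  have h3 : (P *ᵥ e) ⬝ᵥ e = e ⬝ᵥ (P *ᵥ e) := dotProduct_comm _ _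
  simp only [sub_dotProduct, dotProduct_sub]
  rw [h1, h3]
  ring

lemma single_dot_self {n : ℕ} (i : Fin n) : (Pi.single i 1 : Fin n → ℝ) ⬝ᵥ Pi.single i 1 = 1 := by
  simp [dotProduct, Pi.single_apply]

lemma single_dot_mulVec {n : ℕ} (P : Matrix (Fin n) (Fin n) ℝ) (i : Fin n) :
    (Pi.single i 1 : Fin n → ℝ) ⬝ᵥ (P *ᵥ Pi.single i 1) = P i i := by
  simp [dotProduct, Matrix.mulVec, Pi.single_apply, Finset.mul_sum]


theorem gram_eq {k n : ℕ} (Z : Fin k → Fin n → ℝ) (d : Fin n → ℝ) :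
    (Matrix.of Z * Matrix.diagonal d) * (Matrix.of Z * Matrix.diagonal d)ᵀ
      = Matrix.of Z * Matrix.diagonal (fun t => d t ^ 2) * (Matrix.of Z)ᵀ := by
  rw [transpose_mul, diagonal_transpose, Matrix.mul_assoc, ← Matrix.mul_assoc (diagonal d),
    diagonal_mul_diagonal, ← Matrix.mul_assoc]
  congr 2
  funext t
  simp [sq]

theorem quad_entry {k n : ℕ} (Z : Fin k → Fin n → ℝ) (d : Fin n → ℝ) (i : Fin n)
    (N : Matrix (Fin k) (Fin k) ℝ) :
    (((Matrix.of Z * Matrix.diagonal d)ᵀ * N) * (Matrix.of Z * Matrix.diagonal d)) i i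
      = d i ^ 2 * ((fun r => Z r i) ⬝ᵥ (N *ᵥ (fun r => Z r i))) := by
  set A := Matrix.of Z * Matrix.diagonal d with hA
  have hAe : ∀ (r : Fin k) (t : Fin n), A r t = Z r t * d t := by
    intro r t
    simp [hA, Matrix.mul_diagonal]
  simp only [Matrix.mul_apply, Matrix.transpose_apply, hAe, dotProduct,
    Matrix.mulVec, Finset.mul_sum, Finset.sum_mul]
  rw [Finset.sum_comm]
  refine Finset.sum_congr rfl fun r _ => Finset.sum_congr rfl fun s _ => by ring



lemma dot_self_nonneg' {n : ℕ} (v : Fin n → ℝ) : 0 ≤ v ⬝ᵥ v :=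
  Finset.sum_nonneg fun i _ => mul_self_nonneg (v i)

lemma gram_psd_s17 {a b : ℕ} (A : Matrix (Fin a) (Fin b) ℝ) (x : Fin a → ℝ) :
    0 ≤ x ⬝ᵥ ((A * Aᵀ) *ᵥ x) := by
  rw [← Matrix.mulVec_mulVec, Matrix.dotProduct_mulVec, ← Matrix.mulVec_transpose]
  exact dot_self_nonneg' _

lemma gram_symm {a b : ℕ} (A : Matrix (Fin a) (Fin b) ℝ) : (A * Aᵀ)ᵀ = A * Aᵀ := by
  rw [transpose_mul, transpose_transpose]

lemma add_smul_one_posDef {a : ℕ} (M : Matrix (Fin a) (Fin a) ℝ) (hs : Mᵀ = M)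
    (hpsd : ∀ x, 0 ≤ x ⬝ᵥ (M *ᵥ x)) {ε : ℝ} (hε : 0 < ε) :
    (M + ε • 1).PosDef := by
  rw [Matrix.posDef_iff_dotProduct_mulVec]
  constructor
  · show (M + ε • 1)ᴴ = M + ε • 1
    rw [conjTranspose_add, conjTranspose_smul]
    simp only [star_trivial]
    rw [show (M : Matrix (Fin a) (Fin a) ℝ)ᴴ = Mᵀ from rfl, hs]
    congr 1
    · exact congrArg _ (Matrix.conjTranspose_one)
  · intro x hx
    have hq : x ⬝ᵥ ((M + ε • 1) *ᵥ x) = x ⬝ᵥ (M *ᵥ x) + ε * (x ⬝ᵥ x) := by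
      rw [Matrix.add_mulVec, Matrix.smul_mulVec, Matrix.one_mulVec, dotProduct_add,
        dotProduct_smul, smul_eq_mul]
    have hxx : 0 < x ⬝ᵥ x := by
      rcases lt_or_eq_of_le (dot_self_nonneg' x) with h | h
      · exact h
      · exact absurd ((dotProduct_self_eq_zero).mp h.symm) hx
    have hsx : star x = x := by funext t; simp
    rw [hsx, hq]
    have := hpsd x
    nlinarith
lemma add_smul_one_isUnit_det {a : ℕ} (M : Matrix (Fin a) (Fin a) ℝ) (hs : Mᵀ = M)
    (hpsd : ∀ x, 0 ≤ x ⬝ᵥ (M *ᵥ x)) {ε : ℝ} (hε : 0 < ε) :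
    IsUnit (M + ε • 1).det :=
  (add_smul_one_posDef M hs hpsd hε).det_pos.ne'.isUnit

lemma inv_quad_bound {a : ℕ} (M : Matrix (Fin a) (Fin a) ℝ) (hs : Mᵀ = M)
    (hpsd : ∀ x, 0 ≤ x ⬝ᵥ (M *ᵥ x)) {ε : ℝ} (hε : 0 < ε) (x : Fin a → ℝ) :
    0 ≤ x ⬝ᵥ ((M + ε • 1)⁻¹ *ᵥ x) ∧ ε * (x ⬝ᵥ ((M + ε • 1)⁻¹ *ᵥ x)) ≤ x ⬝ᵥ x := by
  set B := (M + ε • 1)⁻¹ with hB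
  have hU : IsUnit (M + ε • 1).det := add_smul_one_isUnit_det M hs hpsd hε
  set y := B *ᵥ x with hy
  have hxy : (M + ε • 1) *ᵥ y = x := by
    rw [hy, Matrix.mulVec_mulVec, Matrix.mul_nonsing_inv _ hU, Matrix.one_mulVec]
  have hexp : ∀ z : Fin a → ℝ, ((M + ε • 1) *ᵥ y) ⬝ᵥ z = (M *ᵥ y) ⬝ᵥ z + ε * (y ⬝ᵥ z) := by
    intro z
    rw [Matrix.add_mulVec, Matrix.smul_mulVec, Matrix.one_mulVec, add_dotProduct,
      smul_dotProduct, smul_eq_mul]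
  have hq' : 0 ≤ y ⬝ᵥ (M *ᵥ y) := hpsd y
  have ht : 0 ≤ y ⬝ᵥ y := dot_self_nonneg' y
  have hm2 : 0 ≤ (M *ᵥ y) ⬝ᵥ (M *ᵥ y) := dot_self_nonneg' _
  have hxBx : x ⬝ᵥ (B *ᵥ x) = y ⬝ᵥ (M *ᵥ y) + ε * (y ⬝ᵥ y) := by
    rw [← hy, ← hxy, hexp y, dotProduct_comm (M *ᵥ y) y]
  have hxx : x ⬝ᵥ x = (M *ᵥ y) ⬝ᵥ (M *ᵥ y) + 2 * ε * (y ⬝ᵥ (M *ᵥ y)) + ε ^ 2 * (y ⬝ᵥ y) := by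
    conv_lhs => rw [← hxy]
    rw [hexp ((M + ε • 1) *ᵥ y)]
    rw [dotProduct_comm (M *ᵥ y) ((M + ε • 1) *ᵥ y),
      dotProduct_comm y ((M + ε • 1) *ᵥ y), hexp (M *ᵥ y), hexp y]
    rw [dotProduct_comm (M *ᵥ y) y]
    ring
  constructor
  · rw [hxBx]; positivity
  · rw [hxBx, hxx]
    nlinarith [mul_nonneg hε.le hq']

lemma single_dot_mulVec' {a : ℕ} (B : Matrix (Fin a) (Fin a) ℝ) (r s : Fin a) :
    (Pi.single r 1 : Fin a → ℝ) ⬝ᵥ (B *ᵥ Pi.single s 1) = B r s := by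
  simp [dotProduct, Matrix.mulVec, Pi.single_apply, Finset.mul_sum]

lemma inv_entry_bound {a : ℕ} (M : Matrix (Fin a) (Fin a) ℝ) (hs : Mᵀ = M)
    (hpsd : ∀ x, 0 ≤ x ⬝ᵥ (M *ᵥ x)) {ε : ℝ} (hε : 0 < ε) (r s : Fin a) :
    |(M + ε • 1)⁻¹ r s| ≤ 1 / ε := by
  set B := (M + ε • 1)⁻¹ with hB
  have hBs : Bᵀ = B := by
    rw [hB, Matrix.transpose_nonsing_inv, transpose_add, hs, transpose_smul, transpose_one]
  have hq := inv_quad_bound M hs hpsd hε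
  -- bilinear expansion helper
  have hbil : ∀ u v : Fin a → ℝ, (u + v) ⬝ᵥ (B *ᵥ (u + v)) =
      u ⬝ᵥ (B *ᵥ u) + u ⬝ᵥ (B *ᵥ v) + v ⬝ᵥ (B *ᵥ u) + v ⬝ᵥ (B *ᵥ v) := by
    intro u v
    rw [Matrix.mulVec_add, add_dotProduct, dotProduct_add, dotProduct_add]
    ring
  have hbil2 : ∀ u v : Fin a → ℝ, (u - v) ⬝ᵥ (B *ᵥ (u - v)) =
      u ⬝ᵥ (B *ᵥ u) - u ⬝ᵥ (B *ᵥ v) - v ⬝ᵥ (B *ᵥ u) + v ⬝ᵥ (B *ᵥ v) := by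
    intro u v
    rw [Matrix.mulVec_sub, sub_dotProduct, dotProduct_sub, dotProduct_sub]
    ring
  set er : Fin a → ℝ := Pi.single r 1 with her
  set es : Fin a → ℝ := Pi.single s 1 with hes
  have hrr : er ⬝ᵥ (B *ᵥ er) = B r r := single_dot_mulVec' B r r
  have hss : es ⬝ᵥ (B *ᵥ es) = B s s := single_dot_mulVec' B s s
  have hrs : er ⬝ᵥ (B *ᵥ es) = B r s := single_dot_mulVec' B r s
  have hsr : es ⬝ᵥ (B *ᵥ er) = B s r := single_dot_mulVec' B s r
  have hsymE : B s r = B r s := by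
    have := congrFun (congrFun hBs s) r
    simpa using this.symm
  have herer : er ⬝ᵥ er = 1 := by rw [her]; simp [dotProduct, Pi.single_apply]
  have heses : es ⬝ᵥ es = 1 := by rw [hes]; simp [dotProduct, Pi.single_apply]
  by_cases hrseq : r = s
  · subst hrseq
    have h1 := (hq er).1
    have h2 := (hq er).2
    rw [hrr] at h1 h2
    rw [herer] at h2
    rw [abs_le]
    constructor
    · have hpos : 0 < 1 / ε := by positivity
      linarith
    · rw [le_div_iff₀ hε]; nlinarith
  · have hub : ∀ u v : Fin a → ℝ, (u + v) ⬝ᵥ (u + v) =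
        u ⬝ᵥ u + u ⬝ᵥ v + v ⬝ᵥ u + v ⬝ᵥ v := by
      intro u v
      rw [add_dotProduct, dotProduct_add, dotProduct_add]
      ring
    have hub2 : ∀ u v : Fin a → ℝ, (u - v) ⬝ᵥ (u - v) =
        u ⬝ᵥ u - u ⬝ᵥ v - v ⬝ᵥ u + v ⬝ᵥ v := by
      intro u v
      rw [sub_dotProduct, dotProduct_sub, dotProduct_sub]
      ring
    have hrs' : s ≠ r := fun h => hrseq h.symm
    have heres : er ⬝ᵥ es = 0 := by
      rw [her, hes]
      simp [dotProduct, Pi.single_apply, hrseq, hrs']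
    have heser : es ⬝ᵥ er = 0 := by
      rw [her, hes]
      simp [dotProduct, Pi.single_apply, hrseq, hrs']
    have hp1 := (hq (er + es)).1
    have hp2 := (hq (er + es)).2
    have hm1 := (hq (er - es)).1
    have hm2' := (hq (er - es)).2
    rw [hbil, hrr, hss, hrs, hsr, hsymE] at hp1 hp2
    rw [hbil2, hrr, hss, hrs, hsr, hsymE] at hm1 hm2'
    rw [hub, herer, heses, heres, heser] at hp2
    rw [hub2, herer, heses, heres, heser] at hm2'
    have h1 := (hq er).2
    rw [hrr, herer] at h1
    have h2 := (hq es).2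
    rw [hss, heses] at h2
    have h1' := (hq er).1
    rw [hrr] at h1'
    have h2' := (hq es).1
    rw [hss] at h2'
    rw [abs_le]
    constructor
    · have h3 : -1 ≤ B r s * ε := by nlinarith [mul_nonneg hε.le hp1]
      rw [show -(1/ε) = (-1)/ε by ring, div_le_iff₀ hε]
      exact h3
    · rw [le_div_iff₀ hε]
      nlinarith [mul_nonneg hε.le hm1]

lemma expand_entry {a b : ℕ} (X : Matrix (Fin b) (Fin a) ℝ) (B : Matrix (Fin a) (Fin a) ℝ)
    (W : Matrix (Fin a) (Fin b) ℝ) (i j : Fin b) :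
    (X * (B * W)) i j = ∑ r, ∑ u, X i r * (B r u * W u j) := by
  simp only [Matrix.mul_apply, Finset.mul_sum]

lemma entry_abs_bound {a b : ℕ} (X : Matrix (Fin b) (Fin a) ℝ) (B : Matrix (Fin a) (Fin a) ℝ)
    (W : Matrix (Fin a) (Fin b) ℝ) (i j : Fin b) (c : ℝ) (hc : 0 ≤ c)
    (hB : ∀ r u, |B r u| ≤ c) :
    |(X * (B * W)) i j| ≤ c * ∑ r, ∑ u, |X i r| * |W u j| := by
  rw [expand_entry]
  refine le_trans (Finset.abs_sum_le_sum_abs _ _) ?_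
  refine le_trans (Finset.sum_le_sum fun r _ => Finset.abs_sum_le_sum_abs
    (fun u => X i r * (B r u * W u j)) Finset.univ) ?_
  rw [Finset.mul_sum]
  refine Finset.sum_le_sum fun r _ => ?_
  rw [Finset.mul_sum]
  refine Finset.sum_le_sum fun u _ => ?_
  rw [abs_mul, abs_mul]
  nlinarith [mul_nonneg (sub_nonneg.mpr (hB r u))
    (mul_nonneg (abs_nonneg (X i r)) (abs_nonneg (W u j))), abs_nonneg (X i r),
    abs_nonneg (W u j), abs_nonneg (B r u)]

section PinvLemmas

variable (pinv : ∀ a b : ℕ, Matrix (Fin a) (Fin b) ℝ → Matrix (Fin b) (Fin a) ℝ)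
    (hpinv1 : ∀ (a b : ℕ) (A : Matrix (Fin a) (Fin b) ℝ), A * pinv a b A * A = A)
    (hpinv2 : ∀ (a b : ℕ) (A : Matrix (Fin a) (Fin b) ℝ),
      pinv a b A * A * pinv a b A = pinv a b A)
    (hpinv3 : ∀ (a b : ℕ) (A : Matrix (Fin a) (Fin b) ℝ), (A * pinv a b A)ᵀ = A * pinv a b A)
    (hpinv4 : ∀ (a b : ℕ) (A : Matrix (Fin a) (Fin b) ℝ), (pinv a b A * A)ᵀ = pinv a b A * A)

set_option linter.unusedSectionVars false

include hpinv1 hpinv2 hpinv3 hpinv4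

theorem pinv_transpose {a b : ℕ} (A : Matrix (Fin a) (Fin b) ℝ) :
    pinv b a Aᵀ = (pinv a b A)ᵀ := by
  refine (penrose_unique Aᵀ (pinv b a Aᵀ) ((pinv a b A)ᵀ) (hpinv1 b a Aᵀ) (hpinv2 b a Aᵀ)
    (hpinv3 b a Aᵀ) (hpinv4 b a Aᵀ) ?_ ?_ ?_ ?_)
  · rw [← transpose_mul, ← transpose_mul, ← Matrix.mul_assoc, hpinv1]
  · rw [← transpose_mul, ← transpose_mul, ← Matrix.mul_assoc, hpinv2]
  · rw [← transpose_mul, transpose_transpose, hpinv4]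
  · rw [← transpose_mul, transpose_transpose, hpinv3]

theorem pinv_symm {a : ℕ} (M : Matrix (Fin a) (Fin a) ℝ) (hM : Mᵀ = M) :
    (pinv a a M)ᵀ = pinv a a M := by
  conv_lhs => rw [← pinv_transpose pinv hpinv1 hpinv2 hpinv3 hpinv4 M, hM]

/-- `A Aᵀ (A⁺)ᵀ = A`. -/
theorem mul_gram_pinvt {a b : ℕ} (A : Matrix (Fin a) (Fin b) ℝ) :
    A * Aᵀ * (pinv a b A)ᵀ = A := by
  rw [Matrix.mul_assoc, ← transpose_mul, hpinv4, ← Matrix.mul_assoc, hpinv1]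

/-- `(AAᵀ)(AAᵀ)⁺ A = A`. -/
theorem gram_pinv_mul {a b : ℕ} (A : Matrix (Fin a) (Fin b) ℝ) :
    A * Aᵀ * pinv a a (A * Aᵀ) * A = A := by
  have hA : A * Aᵀ * (pinv a b A)ᵀ = A := mul_gram_pinvt pinv hpinv1 hpinv2 hpinv3 hpinv4 A
  calc A * Aᵀ * pinv a a (A * Aᵀ) * A
      = A * Aᵀ * pinv a a (A * Aᵀ) * (A * Aᵀ * (pinv a b A)ᵀ) := by rw [hA]
    _ = A * Aᵀ * pinv a a (A * Aᵀ) * (A * Aᵀ) * (pinv a b A)ᵀ := by simp only [Matrix.mul_assoc]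
    _ = A * Aᵀ * (pinv a b A)ᵀ := by rw [hpinv1 a a (A * Aᵀ)]
    _ = A := hA

/-- `A⁺ = Aᵀ (A Aᵀ)⁺`. -/
theorem pinv_eq_gram {a b : ℕ} (A : Matrix (Fin a) (Fin b) ℝ) :
    pinv a b A = Aᵀ * pinv a a (A * Aᵀ) := by
  have hN : (pinv a a (A * Aᵀ))ᵀ = pinv a a (A * Aᵀ) :=
    pinv_symm pinv hpinv1 hpinv2 hpinv3 hpinv4 (A * Aᵀ)
      (by rw [transpose_mul, transpose_transpose])
  have key : A * Aᵀ * pinv a a (A * Aᵀ) * A = A :=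
    gram_pinv_mul pinv hpinv1 hpinv2 hpinv3 hpinv4 A
  refine penrose_unique A (pinv a b A) (Aᵀ * pinv a a (A * Aᵀ)) (hpinv1 a b A) (hpinv2 a b A)
    (hpinv3 a b A) (hpinv4 a b A) ?_ ?_ ?_ ?_
  · calc A * (Aᵀ * pinv a a (A * Aᵀ)) * A = A * Aᵀ * pinv a a (A * Aᵀ) * A := by simp only [Matrix.mul_assoc]
    _ = A := key
  · calc Aᵀ * pinv a a (A * Aᵀ) * A * (Aᵀ * pinv a a (A * Aᵀ))
      = Aᵀ * (pinv a a (A * Aᵀ) * (A * Aᵀ) * pinv a a (A * Aᵀ)) := by simp only [Matrix.mul_assoc]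
    _ = Aᵀ * pinv a a (A * Aᵀ) := by rw [hpinv2]
  · calc (A * (Aᵀ * pinv a a (A * Aᵀ)))ᵀ = (A * Aᵀ * pinv a a (A * Aᵀ))ᵀ := by simp only [Matrix.mul_assoc]
    _ = A * Aᵀ * pinv a a (A * Aᵀ) := hpinv3 a a (A * Aᵀ)
    _ = A * (Aᵀ * pinv a a (A * Aᵀ)) := by simp only [Matrix.mul_assoc]
  · calc (Aᵀ * pinv a a (A * Aᵀ) * A)ᵀ = Aᵀ * ((pinv a a (A * Aᵀ))ᵀ * A) := by simp only [transpose_mul, transpose_transpose, Matrix.mul_assoc]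
    _ = Aᵀ * (pinv a a (A * Aᵀ) * A) := by rw [hN]
    _ = Aᵀ * pinv a a (A * Aᵀ) * A := by rw [Matrix.mul_assoc]

/-- pinv of `A * S` for a symmetric orthogonal `S`. -/
theorem pinv_mul_sign {a b : ℕ} (A : Matrix (Fin a) (Fin b) ℝ) (S : Matrix (Fin b) (Fin b) ℝ)
    (hS : Sᵀ = S) (hS2 : S * S = 1) :
    pinv a b (A * S) = S * pinv a b A := by
  refine penrose_unique (A * S) (pinv a b (A * S)) (S * pinv a b A) (hpinv1 a b (A*S))
    (hpinv2 a b (A*S)) (hpinv3 a b (A*S)) (hpinv4 a b (A*S)) ?_ ?_ ?_ ?_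
  · calc A * S * (S * pinv a b A) * (A * S) = A * (S * S) * (pinv a b A * (A * S)) := by simp only [Matrix.mul_assoc]
    _ = A * (pinv a b A * (A * S)) := by rw [hS2, Matrix.mul_one]
    _ = A * pinv a b A * A * S := by simp only [Matrix.mul_assoc]
    _ = A * S := by rw [hpinv1]
  · calc S * pinv a b A * (A * S) * (S * pinv a b A)
      = S * (pinv a b A * (A * ((S * S) * pinv a b A))) := by simp only [Matrix.mul_assoc]
    _ = S * (pinv a b A * (A * pinv a b A)) := by rw [hS2, Matrix.one_mul]
    _ = S * (pinv a b A * A * pinv a b A) := by simp only [Matrix.mul_assoc]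
    _ = S * pinv a b A := by rw [hpinv2]
  · have h : A * S * (S * pinv a b A) = A * pinv a b A := by
      calc A * S * (S * pinv a b A) = A * ((S * S) * pinv a b A) := by simp only [Matrix.mul_assoc]
      _ = A * pinv a b A := by rw [hS2, Matrix.one_mul]
    rw [h, hpinv3]
  · calc (S * pinv a b A * (A * S))ᵀ = Sᵀ * ((pinv a b A * A)ᵀ * Sᵀ) := by simp only [transpose_mul, Matrix.mul_assoc]
    _ = S * (pinv a b A * A * S) := by rw [hS, hpinv4, Matrix.mul_assoc]
    _ = S * pinv a b A * (A * S) := by simp only [Matrix.mul_assoc]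

theorem proj_idem {a b : ℕ} (A : Matrix (Fin a) (Fin b) ℝ) :
    (pinv a b A * A) * (pinv a b A * A) = pinv a b A * A := by
  have h : pinv a b A * A * (pinv a b A * A) = pinv a b A * (A * pinv a b A * A) := by
    simp only [Matrix.mul_assoc]
  rw [h, hpinv1]

theorem proj_mul_transpose {a b : ℕ} (A : Matrix (Fin a) (Fin b) ℝ) :
    (pinv a b A * A) * Aᵀ = Aᵀ := by
  rw [← hpinv4, ← transpose_mul, ← Matrix.mul_assoc, hpinv1]


set_option maxHeartbeats 1000000 in
theorem key_compare {k n : ℕ} (d : Fin n → ℝ) (hd0 : ∀ t, 0 ≤ d t) (i j : Fin n)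
    (hdji : d j ≤ d i) (Z : Fin k → Fin n → ℝ) :
    (pinv k n (Matrix.of (fun r c => Z r (Equiv.swap i j c)) * Matrix.diagonal d) *
      (Matrix.of (fun r c => Z r (Equiv.swap i j c)) * Matrix.diagonal d)) j j
      ≤ (pinv k n (Matrix.of Z * Matrix.diagonal d) * (Matrix.of Z * Matrix.diagonal d)) i i := by
  by_cases hij : i = j
  · subst hij
    simp only [Equiv.swap_self, Equiv.refl_apply]
    exact le_rfl
  set σ := Equiv.swap i j with hσ
  set A : Matrix (Fin k) (Fin n) ℝ := Matrix.of Z * Matrix.diagonal d with hA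
  set A' : Matrix (Fin k) (Fin n) ℝ := Matrix.of (fun r c => Z r (σ c)) * Matrix.diagonal d
    with hA'
  set P : Matrix (Fin n) (Fin n) ℝ := pinv k n A * A with hP
  set P' : Matrix (Fin n) (Fin n) ℝ := pinv k n A' * A' with hP'
  have hPs : Pᵀ = P := hpinv4 k n A
  have hPi : P * P = P := proj_idem pinv hpinv1 hpinv2 hpinv3 hpinv4 A
  have hP's : P'ᵀ = P' := hpinv4 k n A'
  have hP'i : P' * P' = P' := proj_idem pinv hpinv1 hpinv2 hpinv3 hpinv4 A'
  set ej : Fin n → ℝ := Pi.single j 1 with hej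
  set ei : Fin n → ℝ := Pi.single i 1 with hei
  set w₀ : Fin k → ℝ := (pinv k n A')ᵀ *ᵥ ej with hw₀
  have hrepr : A'ᵀ *ᵥ w₀ = P' *ᵥ ej := by
    rw [hw₀, Matrix.mulVec_mulVec, ← transpose_mul, hpinv4 k n A']
  have h1 : (ej - A'ᵀ *ᵥ w₀) ⬝ᵥ (ej - A'ᵀ *ᵥ w₀) = 1 - P' j j := by
    rw [hrepr, proj_dist_eq P' hP's hP'i ej, hej, single_dot_self, single_dot_mulVec]
  set lam : ℝ := if d i = 0 then 0 else d j / d i with hlam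
  have hdi0 : 0 ≤ d i := hd0 i
  have hdj0 : 0 ≤ d j := hd0 j
  have hlam0 : 0 ≤ lam := by
    rw [hlam]; split
    · exact le_rfl
    · positivity
  have hlam1 : lam ≤ 1 := by
    rw [hlam]; split
    · exact zero_le_one
    · rename_i h
      rw [div_le_one (lt_of_le_of_ne hdi0 (Ne.symm h))]
      exact hdji
  have hlamdi : lam * d i = d j := by
    rw [hlam]; split
    · rename_i h; rw [h, mul_zero]; linarith
    · rename_i h; field_simp
  have hlamdj : lam * d j ≤ d i := by
    calc lam * d j ≤ 1 * d i := mul_le_mul hlam1 hdji hdj0 zero_le_one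
    _ = d i := one_mul _
  set w₁ : Fin k → ℝ := lam • w₀ with hw₁
  have h2 : 1 - P i i ≤ (ei - Aᵀ *ᵥ w₁) ⬝ᵥ (ei - Aᵀ *ᵥ w₁) := by
    have hv : P *ᵥ (Aᵀ *ᵥ w₁) = Aᵀ *ᵥ w₁ := by
      rw [Matrix.mulVec_mulVec, hP, proj_mul_transpose pinv hpinv1 hpinv2 hpinv3 hpinv4 A]
    have h := proj_dist_ge P hPs hPi ei (Aᵀ *ᵥ w₁) hv
    have he1 : ei ⬝ᵥ ei = 1 := by rw [hei]; exact single_dot_self i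
    have he2 : ei ⬝ᵥ (P *ᵥ ei) = P i i := by rw [hei]; exact single_dot_mulVec P i
    rw [he1, he2] at h
    exact h
  set s : Fin n → ℝ := fun t => ∑ r, Z r t * w₀ r with hs
  have hAc : ∀ (r : Fin k) (t : Fin n), A r t = Z r t * d t := by
    intro r t; rw [hA]; simp [Matrix.mul_diagonal]
  have hA'c : ∀ (r : Fin k) (t : Fin n), A' r t = Z r (σ t) * d t := by
    intro r t; rw [hA']; simp [Matrix.mul_diagonal]
  have hcomp1 : ∀ t, (Aᵀ *ᵥ w₁) t = lam * (d t * s t) := by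
    intro t
    simp only [Matrix.mulVec, dotProduct, Matrix.transpose_apply, hAc, hw₁,
      Pi.smul_apply, smul_eq_mul, hs, Finset.mul_sum]
    exact Finset.sum_congr rfl fun r _ => by ring
  have hcomp2 : ∀ t, (A'ᵀ *ᵥ w₀) t = d t * s (σ t) := by
    intro t
    simp only [Matrix.mulVec, dotProduct, Matrix.transpose_apply, hA'c, hs,
      Finset.mul_sum]
    exact Finset.sum_congr rfl fun r _ => by ring
  have h3 : (ei - Aᵀ *ᵥ w₁) ⬝ᵥ (ei - Aᵀ *ᵥ w₁) ≤ (ej - A'ᵀ *ᵥ w₀) ⬝ᵥ (ej - A'ᵀ *ᵥ w₀) := by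
    have hRHS : (ej - A'ᵀ *ᵥ w₀) ⬝ᵥ (ej - A'ᵀ *ᵥ w₀)
        = ∑ t, (ej (σ t) - d (σ t) * s t) ^ 2 := by
      calc (ej - A'ᵀ *ᵥ w₀) ⬝ᵥ (ej - A'ᵀ *ᵥ w₀) = ∑ x, (ej x - d x * s (σ x)) ^ 2 := by
            simp only [dotProduct, Pi.sub_apply, hcomp2]
            exact Finset.sum_congr rfl fun x _ => by ring
      _ = ∑ t, (ej (σ t) - d (σ t) * s (σ (σ t))) ^ 2 :=
            (Equiv.sum_comp σ (fun x => (ej x - d x * s (σ x)) ^ 2)).symm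
      _ = ∑ t, (ej (σ t) - d (σ t) * s t) ^ 2 := by
            refine Finset.sum_congr rfl fun t _ => ?_
            rw [hσ, Equiv.swap_apply_self]
    have hLHS : (ei - Aᵀ *ᵥ w₁) ⬝ᵥ (ei - Aᵀ *ᵥ w₁)
        = ∑ t, (ei t - lam * (d t * s t)) ^ 2 := by
      simp only [dotProduct, Pi.sub_apply, hcomp1]
      exact Finset.sum_congr rfl fun t _ => by ring
    rw [hRHS, hLHS]
    refine Finset.sum_le_sum fun t _ => ?_
    by_cases hti : t = i
    · have e1 : ei t = 1 := by rw [hei, hti]; exact Pi.single_eq_same i 1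
      have e2 : σ t = j := by rw [hσ, hti]; exact Equiv.swap_apply_left i j
      have e3 : ej (σ t) = 1 := by rw [e2, hej]; exact Pi.single_eq_same j 1
      have e5 : lam * (d t * s t) = d j * s t := by rw [← mul_assoc, hti, hlamdi]
      rw [e1, e3, e2, e5]
    · by_cases htj : t = j
      · have e1 : ei t = 0 := by rw [hei]; exact Pi.single_eq_of_ne hti 1
        have e2 : σ t = i := by rw [hσ, htj]; exact Equiv.swap_apply_right i j
        have e3 : ej (σ t) = 0 := by rw [e2, hej]; exact Pi.single_eq_of_ne hij 1
        have hdt : d t = d j := by rw [htj]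
        rw [e1, e3, e2, hdt]
        have key : (lam * d j) ^ 2 ≤ (d i) ^ 2 := by
          nlinarith [mul_nonneg hlam0 hdj0, hlamdj, hdi0]
        have hmul := mul_le_mul_of_nonneg_right key (sq_nonneg (s t))
        nlinarith [hmul]
      · have e1 : ei t = 0 := by rw [hei]; exact Pi.single_eq_of_ne hti 1
        have e2 : σ t = t := by rw [hσ]; exact Equiv.swap_apply_of_ne_of_ne hti htj
        have e3 : ej (σ t) = 0 := by rw [e2, hej]; exact Pi.single_eq_of_ne htj 1
        rw [e1, e3, e2]
        have hl2 : lam ^ 2 ≤ 1 := by nlinarith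
        have hmul := mul_le_mul_of_nonneg_right hl2 (sq_nonneg (d t * s t))
        nlinarith [hmul]
  have hfin : 1 - P i i ≤ 1 - P' j j := le_trans h2 (le_trans h3 (le_of_eq h1))
  linarith

theorem reg_identity {a b : ℕ} (A : Matrix (Fin a) (Fin b) ℝ) {ε : ℝ} (hε : 0 < ε) :
    Aᵀ * ((A * Aᵀ + ε • 1)⁻¹ * A) =
      pinv a b A * A
        - ε • (Aᵀ * (pinv a a (A * Aᵀ) * (pinv a a (A * Aᵀ) * A)))
        + (ε * ε) • (Aᵀ * ((A * Aᵀ + ε • 1)⁻¹ *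
            (pinv a a (A * Aᵀ) * (pinv a a (A * Aᵀ) * A)))) := by
  have hMs : (A * Aᵀ)ᵀ = A * Aᵀ := gram_symm A
  have hNs : (pinv a a (A * Aᵀ))ᵀ = pinv a a (A * Aᵀ) :=
    pinv_symm pinv hpinv1 hpinv2 hpinv3 hpinv4 (A * Aᵀ) hMs
  set M := A * Aᵀ with hM
  set N := pinv a a M with hN
  set B := (M + ε • 1)⁻¹ with hB
  have hU : IsUnit (M + ε • 1).det :=
    add_smul_one_isUnit_det M hMs (fun x => gram_psd_s17 A x) hε
  have hBM : B * M = 1 - ε • B := by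
    have h : B * M + B * (ε • 1) = 1 := by
      rw [← Matrix.mul_add]; exact Matrix.nonsing_inv_mul _ hU
    have h2 : B * (ε • 1) = ε • B := by rw [Matrix.mul_smul, Matrix.mul_one]
    rw [h2] at h
    linear_combination (norm := abel) h
  have hMNA : M * (N * A) = A := by
    have h := gram_pinv_mul pinv hpinv1 hpinv2 hpinv3 hpinv4 A
    rw [← Matrix.mul_assoc]
    exact h
  have hNM : N * M = M * N := by
    have h4 := hpinv4 a a M
    have h3 := hpinv3 a a M
    calc N * M = (N * M)ᵀ := h4.symm
    _ = Mᵀ * Nᵀ := transpose_mul _ _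
    _ = M * N := by rw [hMs, hNs]
  have hNA : N * A = M * (N * (N * A)) := by
    have hNMN : N * M * N = N := hpinv2 a a M
    calc N * A = (N * M * N) * A := by rw [hNMN]
    _ = (M * N * N) * A := by rw [show N * M = M * N from hNM]
    _ = M * (N * (N * A)) := by simp only [Matrix.mul_assoc]
  have hBA : B * A = N * A - ε • (B * (N * A)) := by
    calc B * A = B * (M * (N * A)) := by rw [hMNA]
    _ = (B * M) * (N * A) := (Matrix.mul_assoc B M (N * A)).symm
    _ = (1 - ε • B) * (N * A) := by rw [hBM]
    _ = N * A - ε • (B * (N * A)) := by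
        rw [Matrix.sub_mul, Matrix.one_mul, Matrix.smul_mul]
  have hBNA : B * (N * A) = N * (N * A) - ε • (B * (N * (N * A))) := by
    calc B * (N * A) = B * (M * (N * (N * A))) := by rw [← hNA]
    _ = (B * M) * (N * (N * A)) := (Matrix.mul_assoc B M (N * (N * A))).symm
    _ = (1 - ε • B) * (N * (N * A)) := by rw [hBM]
    _ = N * (N * A) - ε • (B * (N * (N * A))) := by
        rw [Matrix.sub_mul, Matrix.one_mul, Matrix.smul_mul]
  have hPA : pinv a b A * A = Aᵀ * (N * A) := by
    rw [hN, hM, ← Matrix.mul_assoc, ← pinv_eq_gram pinv hpinv1 hpinv2 hpinv3 hpinv4 A]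
  rw [hPA, hBA, hBNA, smul_sub, smul_smul]
  simp only [Matrix.mul_sub, Matrix.mul_smul]
  abel

theorem tendsto_entry {a b : ℕ} (A : Matrix (Fin a) (Fin b) ℝ) (i j : Fin b) :
    Filter.Tendsto
      (fun m : ℕ => (Aᵀ * ((A * Aᵀ + ((1 : ℝ)/(m+1)) • (1 : Matrix (Fin a) (Fin a) ℝ))⁻¹ * A)) i j)
      Filter.atTop (nhds ((pinv a b A * A) i j)) := by
  have hMs : (A * Aᵀ)ᵀ = A * Aᵀ := gram_symm A
  set M := A * Aᵀ with hM
  set N := pinv a a M with hN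
  set W : Matrix (Fin a) (Fin b) ℝ := N * (N * A) with hW
  set C : ℝ := |(Aᵀ * W) i j| + ∑ r, ∑ u, |Aᵀ i r| * |W u j| with hC
  have hC0 : 0 ≤ C := by
    rw [hC]
    have : 0 ≤ ∑ r, ∑ u, |Aᵀ i r| * |W u j| :=
      Finset.sum_nonneg fun r _ => Finset.sum_nonneg fun u _ =>
        mul_nonneg (abs_nonneg _) (abs_nonneg _)
    positivity
  have key : ∀ ε : ℝ, 0 < ε →
      |(Aᵀ * ((M + ε • 1)⁻¹ * A)) i j - (pinv a b A * A) i j| ≤ ε * C := by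
    intro ε hε
    have hid := reg_identity pinv hpinv1 hpinv2 hpinv3 hpinv4 A hε
    have hent := congrFun (congrFun hid i) j
    have hBbound : ∀ r u, |(M + ε • 1)⁻¹ r u| ≤ 1/ε :=
      fun r u => inv_entry_bound M hMs (fun x => gram_psd_s17 A x) hε r u
    have hthird : |(Aᵀ * ((M + ε • 1)⁻¹ * W)) i j| ≤ (1/ε) * ∑ r, ∑ u, |Aᵀ i r| * |W u j| :=
      entry_abs_bound Aᵀ ((M + ε • 1)⁻¹) W i j (1/ε) (by positivity) hBbound
    have hval : (Aᵀ * ((M + ε • 1)⁻¹ * A)) i j = (pinv a b A * A) i j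
        - ε * ((Aᵀ * W) i j) + (ε * ε) * ((Aᵀ * ((M + ε • 1)⁻¹ * W)) i j) := by
      rw [hent]
      simp [Matrix.add_apply, Matrix.sub_apply, Matrix.smul_apply, smul_eq_mul, hW, hN, hM]
    rw [hval]
    have habs : |(pinv a b A * A) i j - ε * ((Aᵀ * W) i j)
        + (ε * ε) * ((Aᵀ * ((M + ε • 1)⁻¹ * W)) i j) - (pinv a b A * A) i j|
        ≤ ε * |(Aᵀ * W) i j| + (ε * ε) * |(Aᵀ * ((M + ε • 1)⁻¹ * W)) i j| := by
      have h1 : (pinv a b A * A) i j - ε * ((Aᵀ * W) i j)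
          + (ε * ε) * ((Aᵀ * ((M + ε • 1)⁻¹ * W)) i j) - (pinv a b A * A) i j
          = - (ε * ((Aᵀ * W) i j)) + (ε * ε) * ((Aᵀ * ((M + ε • 1)⁻¹ * W)) i j) := by ring
      rw [h1]
      refine le_trans (abs_add_le _ _) ?_
      rw [abs_neg, abs_mul, abs_mul, abs_of_pos hε, abs_of_pos (mul_pos hε hε)]
    refine le_trans habs ?_
    have h2 : (ε * ε) * |(Aᵀ * ((M + ε • 1)⁻¹ * W)) i j|
        ≤ ε * ∑ r, ∑ u, |Aᵀ i r| * |W u j| := by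
      have := mul_le_mul_of_nonneg_left hthird (le_of_lt (mul_pos hε hε))
      calc (ε * ε) * |(Aᵀ * ((M + ε • 1)⁻¹ * W)) i j|
          ≤ (ε * ε) * ((1/ε) * ∑ r, ∑ u, |Aᵀ i r| * |W u j|) := this
      _ = ε * ∑ r, ∑ u, |Aᵀ i r| * |W u j| := by field_simp
    rw [hC, mul_add]
    have h3 : ε * |(Aᵀ * W) i j| ≤ ε * |(Aᵀ * W) i j| := le_rfl
    linarith
  have hεpos : ∀ m : ℕ, (0:ℝ) < 1/(m+1) := by
    intro m; positivity
  have hsq : Filter.Tendsto (fun m : ℕ => (1/(m+1) : ℝ) * C) Filter.atTop (nhds 0) := by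
    have := tendsto_one_div_add_atTop_nhds_zero_nat.mul_const C
    simpa using this
  have hdiff : Filter.Tendsto
      (fun m : ℕ => (Aᵀ * ((M + ((1:ℝ)/(m+1)) • 1)⁻¹ * A)) i j - (pinv a b A * A) i j)
      Filter.atTop (nhds 0) := by
    refine squeeze_zero_norm (fun m => ?_) hsq
    rw [Real.norm_eq_abs]
    exact key _ (hεpos m)
  have := hdiff.add_const ((pinv a b A * A) i j)
  simpa using this

theorem measurable_proj_entry {k n : ℕ} (d : Fin n → ℝ) (i j : Fin n) :
    Measurable (fun Z : Fin k → Fin n → ℝ =>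
      (pinv k n (Matrix.of Z * Matrix.diagonal d) * (Matrix.of Z * Matrix.diagonal d)) i j) := by
  have hAcont : Continuous (fun Z : Fin k → Fin n → ℝ => Matrix.of Z * Matrix.diagonal d) := by
    apply continuous_matrix
    intro r t
    have h : (fun Z : Fin k → Fin n → ℝ => (Matrix.of Z * Matrix.diagonal d) r t)
        = fun Z => Z r t * d t := by
      funext Z; simp [Matrix.mul_diagonal]
    rw [h]
    exact ((continuous_apply_apply r t : Continuous fun Z : Fin k → Fin n → ℝ => Z r t)).mul continuous_const
  refine measurable_of_tendsto_metrizable' Filter.atTop (fun m => ?_) (tendsto_pi_nhds.2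
    fun Z => tendsto_entry pinv hpinv1 hpinv2 hpinv3 hpinv4 (Matrix.of Z * Matrix.diagonal d) i j)
  -- measurability of each regularized function
  set c : ℝ := (1 : ℝ)/(m+1) with hc
  set W : (Fin k → Fin n → ℝ) → Matrix (Fin k) (Fin k) ℝ :=
    fun Z => (Matrix.of Z * Matrix.diagonal d) * (Matrix.of Z * Matrix.diagonal d)ᵀ
      + c • (1 : Matrix (Fin k) (Fin k) ℝ) with hWdef
  have hWcont : Continuous W := by
    refine Continuous.add ?_ continuous_const
    exact hAcont.matrix_mul hAcont.matrix_transpose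
  have hinv_meas : ∀ r u, Measurable fun Z => (W Z)⁻¹ r u := by
    intro r u
    have h : (fun Z => (W Z)⁻¹ r u)
        = fun Z => ((W Z).det)⁻¹ * (W Z).adjugate r u := by
      funext Z
      rw [Matrix.inv_def, Matrix.smul_apply, smul_eq_mul, Ring.inverse_eq_inv']
    rw [h]
    exact (hWcont.matrix_det.measurable.inv).mul
      ((hWcont.matrix_adjugate.matrix_elem r u).measurable)
  have hexp : (fun Z : Fin k → Fin n → ℝ =>
      ((Matrix.of Z * Matrix.diagonal d)ᵀ * ((W Z)⁻¹ * (Matrix.of Z * Matrix.diagonal d))) i j)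
      = fun Z => ∑ r, ∑ u, (Matrix.of Z * Matrix.diagonal d)ᵀ i r *
          ((W Z)⁻¹ r u * (Matrix.of Z * Matrix.diagonal d) u j) := by
    funext Z
    exact expand_entry _ _ _ i j
  show Measurable (fun Z : Fin k → Fin n → ℝ =>
      ((Matrix.of Z * Matrix.diagonal d)ᵀ * ((W Z)⁻¹ * (Matrix.of Z * Matrix.diagonal d))) i j)
  rw [hexp]
  refine Finset.measurable_sum _ fun r _ => ?_
  refine Finset.measurable_sum _ fun u _ => ?_
  refine Measurable.mul ?_ (Measurable.mul (hinv_meas r u) ?_)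
  · exact (hAcont.matrix_transpose.matrix_elem i r).measurable
  · exact (hAcont.matrix_elem u j).measurable

end PinvLemmas

open MeasureTheory

/-- The distribution of a `k × n` matrix with i.i.d. standard Gaussian entries. -/
noncomputable def gaussMatrix (k n : ℕ) : Measure (Fin k → Fin n → ℝ) :=
  Measure.pi fun _ => Measure.pi fun _ => ProbabilityTheory.gaussianReal 0 1

theorem gaussMatrix_isProb (k n : ℕ) : IsProbabilityMeasure (gaussMatrix k n) := by
  unfold gaussMatrix; infer_instance

theorem mp_signFlip {k n : ℕ} (i : Fin n) :
    MeasurePreserving (fun Z : Fin k → Fin n → ℝ =>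
      fun r c => (if c = i then (-1:ℝ) else 1) * Z r c) (gaussMatrix k n) (gaussMatrix k n) := by
  unfold gaussMatrix
  have inner1 : ∀ c : Fin n, MeasurePreserving (fun y : ℝ => (if c = i then (-1:ℝ) else 1) * y)
      (ProbabilityTheory.gaussianReal 0 1) (ProbabilityTheory.gaussianReal 0 1) := by
    intro c
    constructor
    · exact measurable_id.const_mul _
    · rw [ProbabilityTheory.gaussianReal_map_const_mul]
      have h2 : (⟨(if c = i then (-1:ℝ) else 1)^2, sq_nonneg _⟩ : NNReal) = 1 := by
        ext
        simp only [NNReal.coe_one]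
        split_ifs <;> norm_num
      rw [mul_zero]
      congr 1
      ext
      simp only [NNReal.coe_mul, NNReal.coe_mk, NNReal.coe_one, mul_one]
      split_ifs <;> norm_num
  have innerRow : MeasurePreserving
      (fun x : Fin n → ℝ => fun c => (if c = i then (-1:ℝ) else 1) * x c)
      (Measure.pi fun _ => ProbabilityTheory.gaussianReal 0 1)
      (Measure.pi fun _ => ProbabilityTheory.gaussianReal 0 1) :=
    measurePreserving_pi _ _ inner1
  exact measurePreserving_pi _ _ (fun _ => innerRow)

theorem mp_swap {k n : ℕ} (σ : Equiv.Perm (Fin n)) :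
    MeasurePreserving (fun Z : Fin k → Fin n → ℝ => fun r c => Z r (σ c))
      (gaussMatrix k n) (gaussMatrix k n) := by
  unfold gaussMatrix
  have inner : MeasurePreserving (fun x : Fin n → ℝ => fun c => x (σ c))
      (Measure.pi fun _ => ProbabilityTheory.gaussianReal 0 1)
      (Measure.pi fun _ => ProbabilityTheory.gaussianReal 0 1) := by
    have hmeas : Measurable (fun x : Fin n → ℝ => fun c => x (σ c)) :=
      measurable_pi_lambda _ fun c => measurable_pi_apply _
    refine ⟨hmeas, ?_⟩
    apply Eq.symm
    apply Measure.pi_eq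
    intro s hs
    rw [Measure.map_apply hmeas (MeasurableSet.univ_pi hs)]
    have hpre : (fun x : Fin n → ℝ => fun c => x (σ c)) ⁻¹' (Set.univ.pi s)
        = Set.univ.pi (fun c => s (σ.symm c)) := by
      ext x
      simp only [Set.mem_preimage, Set.mem_univ_pi]
      constructor
      · intro h c
        have := h (σ.symm c)
        rwa [Equiv.apply_symm_apply] at this
      · intro h c
        have := h (σ c)
        rwa [Equiv.symm_apply_apply] at this
    rw [hpre, Measure.pi_pi]
    exact Equiv.prod_comp σ.symm fun c => (ProbabilityTheory.gaussianReal 0 1) (s c)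
  exact measurePreserving_pi _ _ (fun _ => inner)

/-- Ordering of expected projector diagonals: for `D = diag(d₁ ≥ … ≥ dₙ ≥ 0)` and a
standard Gaussian `Z ∈ ℝ^{k×n}`, the matrix `P̄ = E[(ZD)⁺(ZD)]` is diagonal with
nonincreasing diagonal entries `pᵢ = dᵢ²·E[zᵢᵀ(ZD²Zᵀ)⁺zᵢ]`.  The Moore–Penrose
pseudoinverse is given as an operation `pinv` satisfying the four Penrose conditions. -/
theorem stmt17 {k n : ℕ}
    (pinv : ∀ a b : ℕ, Matrix (Fin a) (Fin b) ℝ → Matrix (Fin b) (Fin a) ℝ)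
    (hpinv1 : ∀ (a b : ℕ) (A : Matrix (Fin a) (Fin b) ℝ), A * pinv a b A * A = A)
    (hpinv2 : ∀ (a b : ℕ) (A : Matrix (Fin a) (Fin b) ℝ),
      pinv a b A * A * pinv a b A = pinv a b A)
    (hpinv3 : ∀ (a b : ℕ) (A : Matrix (Fin a) (Fin b) ℝ), (A * pinv a b A)ᵀ = A * pinv a b A)
    (hpinv4 : ∀ (a b : ℕ) (A : Matrix (Fin a) (Fin b) ℝ), (pinv a b A * A)ᵀ = pinv a b A * A)
    (d : Fin n → ℝ) (hd : ∀ i j : Fin n, i ≤ j → d j ≤ d i) (hd0 : ∀ i, 0 ≤ d i)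
    (D : Matrix (Fin n) (Fin n) ℝ) (hD : D = Matrix.diagonal d)
    (Pbar : Matrix (Fin n) (Fin n) ℝ)
    (hPbar : ∀ i j : Fin n, Pbar i j =
      ∫ Z, (pinv k n (Matrix.of Z * D) * (Matrix.of Z * D)) i j ∂(gaussMatrix k n)) :
    (∀ i j : Fin n, i ≠ j → Pbar i j = 0) ∧
      (∀ i : Fin n, Pbar i i = d i ^ 2 *
        ∫ Z, (fun r => Z r i) ⬝ᵥ
          ((pinv k k (Matrix.of Z * Matrix.diagonal (fun t => d t ^ 2) * (Matrix.of Z)ᵀ)) *ᵥ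
            (fun r => Z r i)) ∂(gaussMatrix k n)) ∧
      (∀ i j : Fin n, i ≤ j → Pbar j j ≤ Pbar i i) := by
  subst hD
  haveI hprob : IsProbabilityMeasure (gaussMatrix k n) := gaussMatrix_isProb k n
  have hdiag0 : ∀ (i' : Fin n) (Z : Fin k → Fin n → ℝ),
      0 ≤ (pinv k n (Matrix.of Z * Matrix.diagonal d) * (Matrix.of Z * Matrix.diagonal d)) i' i' :=
    fun i' Z => proj_diag_nonneg _ (hpinv4 k n _)
      (proj_idem pinv hpinv1 hpinv2 hpinv3 hpinv4 _) i'
  have hdiag1 : ∀ (i' : Fin n) (Z : Fin k → Fin n → ℝ),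
      (pinv k n (Matrix.of Z * Matrix.diagonal d) * (Matrix.of Z * Matrix.diagonal d)) i' i' ≤ 1 :=
    fun i' Z => proj_diag_le_one _ (hpinv4 k n _)
      (proj_idem pinv hpinv1 hpinv2 hpinv3 hpinv4 _) i'
  refine ⟨?_, ?_, ?_⟩
  · -- off-diagonal entries vanish
    intro i j hij
    rw [hPbar i j]
    set f : (Fin k → Fin n → ℝ) → ℝ := fun Z =>
      (pinv k n (Matrix.of Z * Matrix.diagonal d) * (Matrix.of Z * Matrix.diagonal d)) i j
      with hf
    set T : (Fin k → Fin n → ℝ) → (Fin k → Fin n → ℝ) :=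
      fun Z r c => (if c = i then (-1:ℝ) else 1) * Z r c with hT
    have hmp : MeasurePreserving T (gaussMatrix k n) (gaussMatrix k n) := mp_signFlip i
    have hTT : ∀ Z, T (T Z) = Z := by
      intro Z; funext r c
      show (if c = i then (-1:ℝ) else 1) * ((if c = i then (-1:ℝ) else 1) * Z r c) = Z r c
      split_ifs <;> ring
    set e : (Fin k → Fin n → ℝ) ≃ᵐ (Fin k → Fin n → ℝ) :=
      { toFun := T, invFun := T, left_inv := hTT, right_inv := hTT,
        measurable_toFun := hmp.measurable, measurable_invFun := hmp.measurable } with he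
    have hmp' : MeasurePreserving (⇑e) (gaussMatrix k n) (gaussMatrix k n) := hmp
    have hcomp : ∫ Z, f (e Z) ∂(gaussMatrix k n) = ∫ Z, f Z ∂(gaussMatrix k n) :=
      hmp'.integral_comp' f
    set S : Matrix (Fin n) (Fin n) ℝ :=
      Matrix.diagonal (fun c => if c = i then (-1:ℝ) else 1) with hS
    have hSs : Sᵀ = S := Matrix.diagonal_transpose _
    have hSS : S * S = 1 := by
      rw [hS, Matrix.diagonal_mul_diagonal]
      have hfun : (fun c => (if c = i then (-1:ℝ) else 1) * (if c = i then (-1:ℝ) else 1))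
          = fun _ : Fin n => (1:ℝ) := by
        funext c
        split_ifs <;> norm_num
      rw [hfun, Matrix.diagonal_one]
    have hodd : ∀ Z, f (T Z) = - f Z := by
      intro Z
      have hofT : Matrix.of (T Z) * Matrix.diagonal d
          = (Matrix.of Z * Matrix.diagonal d) * S := by
        ext r c
        simp only [Matrix.mul_diagonal, Matrix.of_apply, hS, hT]
        ring
      have h0 : f (T Z) = (pinv k n (Matrix.of (T Z) * Matrix.diagonal d) *
          (Matrix.of (T Z) * Matrix.diagonal d)) i j := rfl
      have h1 : f (T Z) = (pinv k n ((Matrix.of Z * Matrix.diagonal d) * S) *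
          ((Matrix.of Z * Matrix.diagonal d) * S)) i j := by rw [h0, hofT]
      rw [h1, pinv_mul_sign pinv hpinv1 hpinv2 hpinv3 hpinv4 _ S hSs hSS]
      have h2 : (S * pinv k n (Matrix.of Z * Matrix.diagonal d)) *
          ((Matrix.of Z * Matrix.diagonal d) * S)
          = S * ((pinv k n (Matrix.of Z * Matrix.diagonal d) *
              (Matrix.of Z * Matrix.diagonal d)) * S) := by
        simp only [Matrix.mul_assoc]
      rw [h2, hS, Matrix.diagonal_mul, Matrix.mul_diagonal]
      rw [if_pos rfl, if_neg (fun h => hij h.symm)]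
      have hfZ : f Z = (pinv k n (Matrix.of Z * Matrix.diagonal d) *
          (Matrix.of Z * Matrix.diagonal d)) i j := rfl
      rw [hfZ]
      ring
    have hneg : ∫ Z, f (T Z) ∂(gaussMatrix k n) = - ∫ Z, f Z ∂(gaussMatrix k n) := by
      have hfun : (fun Z => f (T Z)) = fun Z => - f Z := funext hodd
      rw [hfun, integral_neg]
    have : ∫ Z, f (e Z) ∂(gaussMatrix k n) = ∫ Z, f (T Z) ∂(gaussMatrix k n) := rfl
    rw [this, hneg] at hcomp
    linarith
  · -- diagonal formula
    intro i
    rw [hPbar i i]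
    have hfun : (fun Z : Fin k → Fin n → ℝ =>
        (pinv k n (Matrix.of Z * Matrix.diagonal d) * (Matrix.of Z * Matrix.diagonal d)) i i)
        = fun Z => d i ^ 2 * ((fun r => Z r i) ⬝ᵥ
            ((pinv k k (Matrix.of Z * Matrix.diagonal (fun t => d t ^ 2) * (Matrix.of Z)ᵀ)) *ᵥ
              (fun r => Z r i))) := by
      funext Z
      rw [pinv_eq_gram pinv hpinv1 hpinv2 hpinv3 hpinv4 (Matrix.of Z * Matrix.diagonal d)]
      rw [gram_eq Z d]
      exact quad_entry Z d i _
    rw [hfun]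
    exact integral_const_mul _ _
  · -- monotonicity of the diagonal
    intro i j hij
    rw [hPbar i i, hPbar j j]
    set fi : (Fin k → Fin n → ℝ) → ℝ := fun Z =>
      (pinv k n (Matrix.of Z * Matrix.diagonal d) * (Matrix.of Z * Matrix.diagonal d)) i i
      with hfi
    set fj : (Fin k → Fin n → ℝ) → ℝ := fun Z =>
      (pinv k n (Matrix.of Z * Matrix.diagonal d) * (Matrix.of Z * Matrix.diagonal d)) j j
      with hfj
    set T : (Fin k → Fin n → ℝ) → (Fin k → Fin n → ℝ) :=
      fun Z r c => Z r (Equiv.swap i j c) with hT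
    have hmp : MeasurePreserving T (gaussMatrix k n) (gaussMatrix k n) := mp_swap _
    have hTT : ∀ Z, T (T Z) = Z := by
      intro Z; funext r c
      show Z r (Equiv.swap i j (Equiv.swap i j c)) = Z r c
      rw [Equiv.swap_apply_self]
    set e : (Fin k → Fin n → ℝ) ≃ᵐ (Fin k → Fin n → ℝ) :=
      { toFun := T, invFun := T, left_inv := hTT, right_inv := hTT,
        measurable_toFun := hmp.measurable, measurable_invFun := hmp.measurable } with he
    have hmp' : MeasurePreserving (⇑e) (gaussMatrix k n) (gaussMatrix k n) := hmp
    have hmeasi : Measurable fi :=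
      measurable_proj_entry pinv hpinv1 hpinv2 hpinv3 hpinv4 d i i
    have hmeasj : Measurable fj :=
      measurable_proj_entry pinv hpinv1 hpinv2 hpinv3 hpinv4 d j j
    have hinti : Integrable fi (gaussMatrix k n) := by
      refine Integrable.mono' (integrable_const (1:ℝ)) hmeasi.aestronglyMeasurable
        (Filter.Eventually.of_forall fun Z => ?_)
      rw [Real.norm_eq_abs, abs_le]
      exact ⟨by linarith [hdiag0 i Z], hdiag1 i Z⟩
    have hintjT : Integrable (fun Z => fj (T Z)) (gaussMatrix k n) := by
      refine Integrable.mono' (integrable_const (1:ℝ))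
        ((hmeasj.comp hmp.measurable).aestronglyMeasurable)
        (Filter.Eventually.of_forall fun Z => ?_)
      rw [Real.norm_eq_abs, abs_le]
      exact ⟨by linarith [hdiag0 j (T Z)], hdiag1 j (T Z)⟩
    have hptw : ∀ Z, fj (T Z) ≤ fi Z := fun Z =>
      key_compare pinv hpinv1 hpinv2 hpinv3 hpinv4 d hd0 i j (hd i j hij) Z
    have hstep : ∫ Z, fj Z ∂(gaussMatrix k n) = ∫ Z, fj (T Z) ∂(gaussMatrix k n) :=
      (hmp'.integral_comp' fj).symm
    calc ∫ Z, fj Z ∂(gaussMatrix k n) = ∫ Z, fj (T Z) ∂(gaussMatrix k n) := hstep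
    _ ≤ ∫ Z, fi Z ∂(gaussMatrix k n) := integral_mono hintjT hinti hptw
end
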